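/- arXiv:1505.07920 — 11 statements merged into one kernel-verified Lean document; each statement's English description precedes it below -/
import Mathlib

section
/- Let F be a continuous mapping from a neighborhood of x̄ in a Banach space X into a Banach space Y. Suppose there exist a bounded linear operator A : X → Y and positive numbers δ, γ, ε such that C(A) > δ + γ and ‖F(x') − F(x) − A(x' − x)‖ < δ‖x' − x‖ whenever x, x' belong to the open ε-ball around x̄. Then B(F(x̄), γt) ⊆ F(B(x̄, t)) for all t ∈ (0, ε). -/
/-!
Since `C(A) > δ + γ`, the operator `A` has a (nonlinear) right inverse of norm at most
`(δ + γ)⁻¹`, and `F` is approximated by `A` with constant `δ` on the `ε`-ball. The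
Lyusternik–Graves iteration `xₙ₊₁ = xₙ + A⁻¹(y - F xₙ)` (Mathlib's
`ApproximatesLinearOn.surjOn_closedBall_of_nonlinearRightInverse`) then contracts
`‖y - F xₙ‖` by the factor `δ / (δ + γ)` while moving `xₙ` by at most a geometric series
summing to `t`; its limit solves `F x = y`.
-/

open ENNReal

/-- The Banach constant of a bounded linear operator:
`C(A) = sup {r ≥ 0 : r·B_Y ⊆ A(B_X)}`. -/
noncomputable def BanachConstant {X Y : Type*} [NormedAddCommGroup X] [NormedSpace ℝ X]
    [NormedAddCommGroup Y] [NormedSpace ℝ Y] (A : X →L[ℝ] Y) : ℝ≥0∞ :=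
  sSup {r : ℝ≥0∞ | ∀ y : Y, (‖y‖₊ : ℝ≥0∞) ≤ r → ∃ x : X, ‖x‖ ≤ 1 ∧ A x = y}

open Metric

section Graves

variable {X Y : Type*} [NormedAddCommGroup X] [NormedSpace ℝ X]
  [NormedAddCommGroup Y] [NormedSpace ℝ Y] {A : X →L[ℝ] Y} {c : ℝ}

theorem exists_norm_le_one_apply_eq_of_ofReal_lt_banachConstant
    (hc : ENNReal.ofReal c < BanachConstant A) {y : Y} (hy : ‖y‖ ≤ c) :
    ∃ x : X, ‖x‖ ≤ 1 ∧ A x = y := by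
  obtain ⟨r, hr, hcr⟩ := lt_sSup_iff.1 hc
  refine hr y (le_trans ?_ hcr.le)
  rw [← ENNReal.ofReal_coe_nnreal, coe_nnnorm]
  exact ENNReal.ofReal_le_ofReal hy

theorem exists_norm_le_inv_mul_apply_eq_of_ofReal_lt_banachConstant (hc0 : 0 < c)
    (hc : ENNReal.ofReal c < BanachConstant A) (y : Y) :
    ∃ x : X, ‖x‖ ≤ c⁻¹ * ‖y‖ ∧ A x = y := by
  rcases eq_or_ne y 0 with rfl | hy
  · exact ⟨0, by simp, map_zero A⟩
  have hy0 : 0 < ‖y‖ := norm_pos_iff.2 hy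
  obtain ⟨x, hx1, hAx⟩ := exists_norm_le_one_apply_eq_of_ofReal_lt_banachConstant
    (y := (c / ‖y‖) • y) hc (by rw [norm_smul, Real.norm_of_nonneg (by positivity),
      div_mul_cancel₀ _ hy0.ne'])
  refine ⟨(‖y‖ / c) • x, ?_, ?_⟩
  · rw [norm_smul, Real.norm_of_nonneg (by positivity), div_eq_inv_mul]
    exact mul_le_of_le_one_right (by positivity) hx1
  · rw [map_smul, hAx, smul_smul, div_mul_div_comm, mul_comm ‖y‖, div_self (by positivity),
      one_smul]

theorem exists_nonlinearRightInverse_of_ofReal_lt_banachConstant (hc0 : 0 < c)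
    (hc : ENNReal.ofReal c < BanachConstant A) :
    ∃ g : A.NonlinearRightInverse, (g.nnnorm : ℝ) = c⁻¹ := by
  choose g hg hAg using exists_norm_le_inv_mul_apply_eq_of_ofReal_lt_banachConstant hc0 hc
  exact ⟨⟨g, ⟨c⁻¹, inv_nonneg.2 hc0.le⟩, hg, hAg⟩, rfl⟩

theorem approximatesLinearOn_of_forall_ne_norm_sub_lt {F : X → Y} {s : Set X} {δ : ℝ}
    (hδ : 0 ≤ δ)
    (happrox : ∀ x ∈ s, ∀ x' ∈ s, x ≠ x' → ‖F x' - F x - A (x' - x)‖ < δ * ‖x' - x‖) :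
    ApproximatesLinearOn F A s δ.toNNReal := by
  intro x' hx' x hx
  rcases eq_or_ne x x' with rfl | hne
  · simp
  · rw [Real.coe_toNNReal δ hδ]
    exact (happrox x hx x' hx' hne).le

end Graves

theorem graves_theorem_general {X Y : Type*} [NormedAddCommGroup X] [NormedSpace ℝ X] [CompleteSpace X]
    [NormedAddCommGroup Y] [NormedSpace ℝ Y]
    (F : X → Y) (xb : X) (A : X →L[ℝ] Y) (δ γ ε : ℝ)
    (hδ : 0 < δ) (hγ : 0 < γ)
    (hC : ENNReal.ofReal (δ + γ) < BanachConstant A)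
    (happrox : ∀ x ∈ Metric.ball xb ε, ∀ x' ∈ Metric.ball xb ε, x ≠ x' →
      ‖F x' - F x - A (x' - x)‖ < δ * ‖x' - x‖) :
    ∀ t ∈ Set.Ioo (0:ℝ) ε, ∀ y ∈ Metric.closedBall (F xb) (γ * t),
      ∃ x ∈ Metric.closedBall xb t, F x = y := by
  intro t ⟨ht0, htε⟩ y hy
  obtain ⟨g, hg⟩ :=
    exists_nonlinearRightInverse_of_ofReal_lt_banachConstant (by positivity) hC
  have hsurj := (approximatesLinearOn_of_forall_ne_norm_sub_lt hδ.le happrox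
    ).surjOn_closedBall_of_nonlinearRightInverse g ht0.le (closedBall_subset_ball htε)
  rw [hg, inv_inv, Real.coe_toNNReal δ hδ.le, add_sub_cancel_left] at hsurj
  exact hsurj hy

/-- Graves' theorem: if `F` is continuous near `xb`, `A` is a bounded linear operator
with `C(A) > δ + γ`, and `‖F x' - F x - A (x' - x)‖ < δ ‖x' - x‖` on the open
`ε`-ball around `xb`, then `B(F xb, γ t) ⊆ F (B(xb, t))` for all `t ∈ (0, ε)`. -/
theorem graves_theorem {X Y : Type*} [NormedAddCommGroup X] [NormedSpace ℝ X] [CompleteSpace X]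
    [NormedAddCommGroup Y] [NormedSpace ℝ Y] [CompleteSpace Y]
    (F : X → Y) (xb : X) (A : X →L[ℝ] Y) (δ γ ε : ℝ)
    (hδ : 0 < δ) (hγ : 0 < γ) (hε : 0 < ε)
    (hF : ContinuousOn F (Metric.ball xb ε))
    (hC : ENNReal.ofReal (δ + γ) < BanachConstant A)
    (happrox : ∀ x ∈ Metric.ball xb ε, ∀ x' ∈ Metric.ball xb ε, x ≠ x' →
      ‖F x' - F x - A (x' - x)‖ < δ * ‖x' - x‖) :
    ∀ t ∈ Set.Ioo (0:ℝ) ε, ∀ y ∈ Metric.closedBall (F xb) (γ * t),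
      ∃ x ∈ Metric.closedBall xb t, F x = y :=
  graves_theorem_general F xb A δ γ ε hδ hγ hC happrox
end

section
/- Let X be a complete metric space, Y a metric space, U ⊆ X and V ⊆ Y open sets, and F : X ⇒ Y a set-valued mapping with closed graph. Define ψ_y(x) = d(y, F(x)) and ψ̄_y(x) = liminf_{u→x} ψ_y(u). If for any x ∈ U and y ∈ V with 0 < ψ̄_y(x) < r·m(x) (where m(x) = d(x, X∖U)) there exists u ≠ x such that ψ̄_y(u) ≤ ψ̄_y(x) − r·d(x,u), then F is Milyutin regular on U × V with sur_m F(U|V) ≥ r. -/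
/-!
By Ekeland's variational principle, `ψ̄_y` (lower semicontinuous, finite at `x` because
`d(y, F x) ≤ r t`) has a point `u` with `ψ̄_y(u) + r d(x,u) ≤ ψ̄_y(x)` that no other point
improves on in the sense `ψ̄_y(w) + r d(u,w) ≤ ψ̄_y(u)`. Hence `d(x,u) ≤ t`, and `ψ̄_y(u) = 0`,
since otherwise `0 < ψ̄_y(u) < r m(u)` and the descent hypothesis would produce such a `w`.
The closed graph turns `ψ̄_y(u) = 0` into `y ∈ F u`.
-/

open EMetric ENNReal Filter

/-- `ψ̄_y(x) = liminf_{u → x} d(y, F u)`, the lower semicontinuous envelope of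
`ψ_y(x) = d(y, F x)` (with `d(y, ∅) = ∞`). -/
noncomputable def psiBar {X Y : Type*} [MetricSpace X] [MetricSpace Y]
    (F : X → Set Y) (y : Y) (x : X) : ℝ≥0∞ :=
  liminf (fun u => infEdist y (F u)) (nhds x)

open Topology Metric

section LiminfEnvelope

variable {α : Type*} [TopologicalSpace α] (f : α → ℝ≥0∞)

lemma liminf_nhds_le_self (x : α) : liminf f (𝓝 x) ≤ f x :=
  liminf_le_of_frequently_le' <| frequently_iff.2 fun hs => ⟨x, mem_of_mem_nhds hs, le_rfl⟩

lemma lowerSemicontinuous_liminf_nhds : LowerSemicontinuous fun x => liminf f (𝓝 x) := by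
  intro x a ha
  obtain ⟨b, hab, hb⟩ := exists_between ha
  obtain ⟨s, hs, hso, hxs⟩ := eventually_nhds_iff.1 (eventually_lt_of_lt_liminf hb)
  filter_upwards [hso.mem_nhds hxs] with u hu
  refine hab.trans_le (le_liminf_of_le (by isBoundedDefault) ?_)
  filter_upwards [hso.mem_nhds hu] with w hw
  exact (hs w hw).le

end LiminfEnvelope

section DescentSet

variable {X : Type*} [PseudoEMetricSpace X] (f : X → ℝ≥0∞) (r : ℝ≥0∞)

def descentSet (c : X) : Set X := {w | f w + r * edist c w ≤ f c}

def IsEkelandSeq (c : ℕ → X) : Prop :=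
  ∀ n, c (n + 1) ∈ descentSet f r (c n) ∧
    f (c (n + 1)) ≤ (⨅ w ∈ descentSet f r (c n), f w) + 2⁻¹ ^ n

variable {f r}

lemma self_mem_descentSet (c : X) : c ∈ descentSet f r c := by
  simp [descentSet]

lemma descentSet_subset {c c' : X} (h : c' ∈ descentSet f r c) :
    descentSet f r c' ⊆ descentSet f r c := fun w hw =>
  calc f w + r * edist c w ≤ f w + r * (edist c c' + edist c' w) := by
        gcongr; exact edist_triangle _ _ _
    _ = (f w + r * edist c' w) + r * edist c c' := by ring
    _ ≤ f c' + r * edist c c' := by gcongr; exact hw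
    _ ≤ f c := h

lemma isClosed_descentSet (hf : LowerSemicontinuous f) (hr : r ≠ ⊤) (c : X) :
    IsClosed (descentSet f r c) :=
  (hf.add ((ENNReal.continuous_const_mul hr).comp
    (continuous_const.edist continuous_id)).lowerSemicontinuous).isClosed_preimage (f c)

lemma exists_mem_descentSet_le_iInf_add (c : X) {e : ℝ≥0∞} (he : e ≠ 0) :
    ∃ w ∈ descentSet f r c, f w ≤ (⨅ w' ∈ descentSet f r c, f w') + e := by
  by_cases hi : (⨅ w' ∈ descentSet f r c, f w') = ⊤
  · exact ⟨c, self_mem_descentSet c, by simp [hi]⟩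
  · obtain ⟨w, hw⟩ := iInf_lt_iff.1 (ENNReal.lt_add_right hi he)
    obtain ⟨hwS, hwlt⟩ := iInf_lt_iff.1 hw
    exact ⟨w, hwS, hwlt.le⟩

lemma mul_edist_le_of_le_iInf_add {c c' w : X} {e : ℝ≥0∞} (hc' : c' ∈ descentSet f r c)
    (hmin : f c' ≤ (⨅ w' ∈ descentSet f r c, f w') + e) (hw : w ∈ descentSet f r c')
    (hfw : f w ≠ ⊤) : r * edist c' w ≤ e := by
  refine (ENNReal.add_le_add_iff_left hfw).1 ?_
  calc f w + r * edist c' w ≤ f c' := hw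
    _ ≤ (⨅ w' ∈ descentSet f r c, f w') + e := hmin
    _ ≤ f w + e := by gcongr; exact biInf_le _ (descentSet_subset hc' hw)

lemma exists_isEkelandSeq (x : X) : ∃ c : ℕ → X, c 0 = x ∧ IsEkelandSeq f r c := by
  choose next hnext using fun (n : ℕ) (p : X) =>
    exists_mem_descentSet_le_iInf_add (f := f) (r := r) p (e := 2⁻¹ ^ n) (by simp)
  exact ⟨fun n => Nat.rec x (fun n p => next n p) n, rfl, fun n => hnext n _⟩

lemma IsEkelandSeq.edist_le {c : ℕ → X} (hc : IsEkelandSeq f r c) (n : ℕ) {w : X}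
    (hw : w ∈ descentSet f r (c (n + 1))) (hfw : f w ≠ ⊤) :
    edist (c (n + 1)) w ≤ r⁻¹ * 2⁻¹ ^ n := by
  rw [← ENNReal.div_eq_inv_mul, ENNReal.le_div_iff_mul_le (by simp) (by simp), mul_comm]
  exact mul_edist_le_of_le_iInf_add (hc n).1 (hc n).2 hw hfw

lemma IsEkelandSeq.tendsto {c : ℕ → X} (hc : IsEkelandSeq f r c) (hr : r ≠ 0) {w : X}
    (hw : ∀ n, w ∈ descentSet f r (c n)) (hfw : f w ≠ ⊤) :
    Tendsto (fun n => c (n + 1)) atTop (𝓝 w) := by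
  have hlim : Tendsto (fun n : ℕ => r⁻¹ * 2⁻¹ ^ n) atTop (𝓝 0) := by
    simpa using ENNReal.Tendsto.const_mul
      (ENNReal.tendsto_pow_atTop_nhds_zero_of_lt_one (by norm_num)) (Or.inr (inv_ne_top.2 hr))
  exact tendsto_iff_edist_tendsto_0.2 <| tendsto_of_tendsto_of_tendsto_of_le_of_le
    tendsto_const_nhds hlim (fun _ => zero_le) fun n => hc.edist_le n (hw _) hfw

end DescentSet

/-- Ekeland's variational principle. -/
theorem exists_forall_mem_descentSet_eq {X : Type*} [EMetricSpace X] [CompleteSpace X]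
    {f : X → ℝ≥0∞} {r : ℝ≥0∞} (hf : LowerSemicontinuous f) (hr0 : r ≠ 0)
    (hr : r ≠ ⊤) {x : X} (hx : f x ≠ ⊤) :
    ∃ u ∈ descentSet f r x, ∀ w ∈ descentSet f r u, w = u := by
  obtain ⟨c, rfl, hc⟩ := exists_isEkelandSeq (f := f) (r := r) x
  have hanti : Antitone fun n => descentSet f r (c n) :=
    antitone_nat_of_succ_le fun n => descentSet_subset (hc n).1
  have hfin : ∀ n, ∀ w ∈ descentSet f r (c n), f w ≠ ⊤ := fun n w hw =>
    ne_top_of_le_ne_top hx (le_self_add.trans (hanti n.zero_le hw))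
  have hcauchy : CauchySeq fun n => c (n + 1) :=
    cauchySeq_of_edist_le_geometric 2⁻¹ r⁻¹ (by norm_num) (inv_ne_top.2 hr0) fun n =>
      hc.edist_le n (hc (n + 1)).1 (hfin _ _ (hc (n + 1)).1)
  obtain ⟨u, hu⟩ := cauchySeq_tendsto_of_complete hcauchy
  have huS : ∀ n, u ∈ descentSet f r (c n) := fun n =>
    (isClosed_descentSet hf hr _).mem_of_tendsto hu <| (eventually_ge_atTop n).mono
      fun m hm => hanti (hm.trans m.le_succ) (self_mem_descentSet _)
  refine ⟨u, huS 0, fun w hw => tendsto_nhds_unique ?_ hu⟩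
  have hwS : ∀ n, w ∈ descentSet f r (c n) := fun n => descentSet_subset (huS n) hw
  exact hc.tendsto hr0 hwS (hfin 0 w (hwS 0))

lemma psiBar_le_infEDist {X Y : Type*} [MetricSpace X] [MetricSpace Y] (F : X → Set Y) (y : Y)
    (x : X) : psiBar F y x ≤ infEDist y (F x) :=
  liminf_nhds_le_self _ x

lemma lowerSemicontinuous_psiBar {X Y : Type*} [MetricSpace X] [MetricSpace Y] (F : X → Set Y)
    (y : Y) : LowerSemicontinuous (psiBar F y) :=
  lowerSemicontinuous_liminf_nhds _

lemma mem_of_psiBar_eq_zero {X Y : Type*} [MetricSpace X] [MetricSpace Y] {F : X → Set Y}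
    (hgraph : IsClosed {p : X × Y | p.2 ∈ F p.1}) {y : Y} {x : X} (h : psiBar F y x = 0) :
    y ∈ F x := by
  show (x, y) ∈ {p : X × Y | p.2 ∈ F p.1}
  rw [← hgraph.closure_eq, mem_closure_iff_nhds]
  intro s hs
  obtain ⟨s₁, hs₁, s₂, hs₂, hsub⟩ := mem_nhds_prod_iff.1 hs
  obtain ⟨ε, hε, hball⟩ := EMetric.mem_nhds_iff.1 hs₂
  have hfreq : ∃ᶠ u in 𝓝 x, infEDist y (F u) < ε :=
    frequently_lt_of_liminf_lt (by isBoundedDefault) (h.trans_lt hε)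
  obtain ⟨u, hu, hus⟩ := (hfreq.and_eventually hs₁).exists
  obtain ⟨v, hvF, hv⟩ := infEDist_lt_iff.1 hu
  exact ⟨(u, v), hsub ⟨hus, hball (by rwa [mem_eball, edist_comm])⟩, hvF⟩

lemma lt_mul_infEDist_of_add_mul_edist_lt {X : Type*} [PseudoEMetricSpace X] {s : Set X}
    {x u : X} {a r : ℝ≥0∞} (h : a + r * edist x u < r * infEDist x s) :
    a < r * infEDist u s := by
  have hfin : r * edist x u ≠ ⊤ := ne_top_of_lt (le_add_self.trans_lt h)
  refine (ENNReal.add_lt_add_iff_right hfin).1 (h.trans_le ?_)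
  rw [← mul_add]
  exact mul_le_mul_right infEDist_le_infEDist_add_edist r

theorem second_milyutin_criterion_general {X Y : Type*} [MetricSpace X] [CompleteSpace X]
    [MetricSpace Y]
    (F : X → Set Y) (U : Set X) (V : Set Y)
    (hgraph : IsClosed {p : X × Y | p.2 ∈ F p.1})
    (r : ℝ≥0∞) (hr : 0 < r) (hrtop : r ≠ ⊤)
    (descent : ∀ x ∈ U, ∀ y ∈ V,
      0 < psiBar F y x → psiBar F y x < r * infEdist x Uᶜ →
      ∃ u : X, u ≠ x ∧ psiBar F y u + r * edist x u ≤ psiBar F y x) :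
    ∀ x ∈ U, ∀ t : ℝ≥0∞, t < infEdist x Uᶜ → ∀ y ∈ V,
      (∃ v ∈ F x, edist y v ≤ r * t) → ∃ u : X, edist x u ≤ t ∧ y ∈ F u := by
  rintro x - t ht y hy ⟨v, hv, hvy⟩
  have hψx : psiBar F y x ≤ r * t :=
    (psiBar_le_infEDist F y x).trans ((infEDist_le_edist_of_mem hv).trans hvy)
  obtain ⟨u, hu, hmin⟩ := exists_forall_mem_descentSet_eq (lowerSemicontinuous_psiBar F y)
    hr.ne' hrtop (ne_top_of_le_ne_top (mul_ne_top hrtop ht.ne_top) hψx)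
  have hux : psiBar F y u + r * edist x u ≤ r * t := hu.trans hψx
  refine ⟨u, (ENNReal.mul_le_mul_iff_right hr.ne' hrtop).1 (le_add_self.trans hux),
    mem_of_psiBar_eq_zero hgraph ?_⟩
  by_contra hpos
  have hlt : psiBar F y u < r * infEDist u Uᶜ := lt_mul_infEDist_of_add_mul_edist_lt <|
    hux.trans_lt ((ENNReal.mul_lt_mul_iff_right hr.ne' hrtop).2 ht)
  have huU : u ∈ U := by
    by_contra hu
    simp [infEDist_zero_of_mem (Set.mem_compl hu)] at hlt
  obtain ⟨w, hwu, hw⟩ := descent u huU y hy (pos_iff_ne_zero.2 hpos) hlt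
  exact hwu (hmin w hw)

/-- Second criterion for Milyutin regularity (sufficiency): if whenever
`0 < ψ̄_y(x) < r·m(x)` (`x ∈ U`, `y ∈ V`, `m(x) = d(x, X∖U)`) there is `u ≠ x`
with `ψ̄_y(u) ≤ ψ̄_y(x) − r·d(x,u)`, then `F` is Milyutin regular on `U × V`
with `sur_m F(U|V) ≥ r`. -/
theorem second_milyutin_criterion {X Y : Type*} [MetricSpace X] [CompleteSpace X]
    [MetricSpace Y]
    (F : X → Set Y) (U : Set X) (V : Set Y) (hU : IsOpen U) (hV : IsOpen V)
    (hgraph : IsClosed {p : X × Y | p.2 ∈ F p.1})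
    (r : ℝ≥0∞) (hr : 0 < r) (hrtop : r ≠ ⊤)
    (descent : ∀ x ∈ U, ∀ y ∈ V,
      0 < psiBar F y x → psiBar F y x < r * infEdist x Uᶜ →
      ∃ u : X, u ≠ x ∧ psiBar F y u + r * edist x u ≤ psiBar F y x) :
    ∀ x ∈ U, ∀ t : ℝ≥0∞, t < infEdist x Uᶜ → ∀ y ∈ V,
      (∃ v ∈ F x, edist y v ≤ r * t) → ∃ u : X, edist x u ≤ t ∧ y ∈ F u :=
  second_milyutin_criterion_general F U V hgraph r hr hrtop descent
end

section
/- Let U ⊆ X and V ⊆ Y be open sets in metric spaces, and F : X ⇒ Y a set-valued mapping with complete graph. Assume that whenever x ∈ U, v ∈ F(x), and t < m(x) = d(x, X∖U), the set F(B(x,t)) is an ℓt-net in B(v, rt) ∩ V, where 0 ≤ ℓ < r. Then F is Milyutin regular on U × V with sur_m F(U|V) ≥ r − ℓ. In particular, if F(B(x,t)) is dense in B(F(x), rt) ∩ V for x ∈ U and t < m(x), then sur_m F(U|V) ≥ r. -/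
/-!
Starting from `(x, v)` in the graph, iterate the net property with shrinking budgets: if
`(xₙ, vₙ)` lies in the graph with `d(y, vₙ) ≤ (r - ℓ) sₙ`, apply it at `xₙ` with radius
`(r - ℓ) sₙ / r` to get `(xₙ₊₁, vₙ₊₁)` with `d(y, vₙ₊₁) ≤ (r - ℓ) q sₙ`, `q = ℓ / r < 1`.
The radii `(1 - q) qⁿ t` add up to `t`, so every `xₙ` stays in `B(x, t)` and hence in `U`
with room to spare; the steps decay geometrically, so the sequence converges in the complete
graph, and its limit `(u, y)` is the required preimage.
-/

open EMetric Metric ENNReal Filter Topology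

theorem Metric.lt_infEDist_of_edist_add_le {α : Type*} [PseudoEMetricSpace α] {A : Set α}
    {x z : α} {s t : ℝ≥0∞} (h : edist x z + s ≤ t) (ht : t < infEDist x A) :
    s < infEDist z A := by
  have hxz : edist x z ≠ ⊤ := ((le_self_add.trans h).trans_lt (ht.trans_le le_top)).ne
  have := (h.trans_lt ht).trans_le (infEDist_le_infEDist_add_edist (y := z))
  rw [add_comm (infEDist z A)] at this
  exact (ENNReal.add_lt_add_iff_left hxz).1 this

theorem exists_tendsto_of_forall_exists_step {Z : Type*} [PseudoEMetricSpace Z] {G : Set Z}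
    (hG : IsComplete G) {P : Z → ℝ≥0∞ → Prop} (hPG : ∀ z s, P z s → z ∈ G) {q C : ℝ≥0∞}
    (hq : q < 1) (hC : C ≠ ⊤)
    (hstep : ∀ z s, P z s → ∃ z', P z' (q * s) ∧ edist z z' ≤ C * s)
    {z₀ : Z} {s₀ : ℝ≥0∞} (hs₀ : s₀ ≠ ⊤) (h₀ : P z₀ s₀) :
    ∃ z : ℕ → Z, (∀ n, P (z n) (q ^ n * s₀)) ∧ ∃ z' ∈ G, Tendsto z atTop (𝓝 z') := by
  choose! next hnextP hnextd using hstep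
  let z : ℕ → Z := fun n => Nat.rec z₀ (fun k zk => next zk (q ^ k * s₀)) n
  have hP : ∀ n, P (z n) (q ^ n * s₀) := by
    intro n
    induction n with
    | zero => rw [pow_zero, one_mul]; exact h₀
    | succ n ih => simpa only [pow_succ', mul_assoc] using hnextP _ _ ih
  have hdist : ∀ n, edist (z n) (z (n + 1)) ≤ C * s₀ * q ^ n := fun n =>
    calc edist (z n) (z (n + 1)) ≤ C * (q ^ n * s₀) := hnextd _ _ (hP n)
      _ = C * s₀ * q ^ n := by ring
  have hz : CauchySeq z :=
    cauchySeq_of_edist_le_geometric q (C * s₀) hq (ENNReal.mul_ne_top hC hs₀) hdist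
  exact ⟨z, hP, cauchySeq_tendsto_of_isComplete hG (fun n => hPG _ _ (hP n)) hz⟩

theorem ENNReal.sub_div_add_div_self {r ℓ : ℝ≥0∞} (hℓr : ℓ ≤ r) (hr0 : r ≠ 0) (hr : r ≠ ⊤) :
    (r - ℓ) / r + ℓ / r = 1 := by
  rw [ENNReal.div_add_div_same, tsub_add_cancel_of_le hℓr, ENNReal.div_self hr0 hr]

section Net

variable {X Y : Type*} [PseudoEMetricSpace X] [PseudoEMetricSpace Y] {F : X → Set Y}
  {U : Set X} {V : Set Y} {r ℓ : ℝ≥0∞}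

-- `s` is the part of the radius `t` not yet spent by the iteration.
theorem exists_graph_step_of_net (hℓr : ℓ < r) (hr : r ≠ ⊤)
    (hnet : ∀ x ∈ U, ∀ v ∈ F x, ∀ t : ℝ≥0∞, t < infEDist x Uᶜ →
      ∀ y ∈ V, edist y v ≤ r * t →
        ∃ u : X, ∃ w ∈ F u, edist x u ≤ t ∧ edist y w ≤ ℓ * t)
    {x : X} {t : ℝ≥0∞} (ht : t < infEDist x Uᶜ) {y : Y} (hy : y ∈ V) {p : X × Y} {s : ℝ≥0∞}
    (hp : p.2 ∈ F p.1) (hbudget : edist x p.1 + s ≤ t) (hyp : edist y p.2 ≤ (r - ℓ) * s) :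
    ∃ p' : X × Y, (p'.2 ∈ F p'.1 ∧ edist x p'.1 + ℓ / r * s ≤ t ∧
      edist y p'.2 ≤ (r - ℓ) * (ℓ / r * s)) ∧ edist p p' ≤ (1 + 2 * (r - ℓ)) * s := by
  have hr0 : r ≠ 0 := (pos_of_gt hℓr).ne'
  set s' := (r - ℓ) / r * s
  have hsplit : s' + ℓ / r * s = s := by
    rw [← add_mul, ENNReal.sub_div_add_div_self hℓr.le hr0 hr, one_mul]
  have hs'r : edist y p.2 ≤ r * s' := by
    rwa [← mul_assoc, ENNReal.mul_div_cancel hr0 hr]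
  have hs'U : s' < infEDist p.1 Uᶜ := by
    refine lt_infEDist_of_edist_add_le (le_trans ?_ hbudget) ht
    gcongr
    exact le_self_add.trans_eq hsplit
  have hpU : p.1 ∈ U := by
    by_contra h
    simp [infEDist_zero_of_mem (Set.mem_compl h)] at hs'U
  obtain ⟨u, w, hw, hpu, hyw⟩ := hnet p.1 hpU p.2 hp s' hs'U y hy hs'r
  have hyw' : edist y w ≤ (r - ℓ) * (ℓ / r * s) :=
    hyw.trans_eq (by simp only [s', div_eq_mul_inv]; ring)
  refine ⟨(u, w), ⟨hw, ?_, hyw'⟩, ?_⟩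
  · calc edist x u + ℓ / r * s ≤ edist x p.1 + s' + ℓ / r * s := by
          gcongr; exact (edist_triangle _ _ _).trans (add_le_add le_rfl hpu)
      _ ≤ t := by rwa [add_assoc, hsplit]
  · have hqs : ℓ / r * s ≤ s := le_add_self.trans_eq hsplit
    rw [Prod.edist_eq]
    refine max_le ?_ ?_
    · calc edist p.1 u ≤ s := hpu.trans (le_self_add.trans_eq hsplit)
        _ ≤ (1 + 2 * (r - ℓ)) * s := le_mul_of_one_le_left' le_self_add
    · calc edist p.2 w ≤ edist p.2 y + edist y w := edist_triangle _ _ _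
        _ ≤ (r - ℓ) * s + (r - ℓ) * s := by
            rw [edist_comm]; exact add_le_add hyp (hyw'.trans (by gcongr))
        _ ≤ (1 + 2 * (r - ℓ)) * s := by rw [← add_mul, ← two_mul]; gcongr; exact le_add_self

end Net

theorem density_theorem_general {X Y : Type*} [MetricSpace X] [MetricSpace Y]
    (F : X → Set Y) (U : Set X) (V : Set Y)
    (hcomp : IsComplete {p : X × Y | p.2 ∈ F p.1})
    (r ℓ : ℝ≥0∞) (hlr : ℓ < r) (hrtop : r ≠ ⊤)
    (hnet : ∀ x ∈ U, ∀ v ∈ F x, ∀ t : ℝ≥0∞, t < infEdist x Uᶜ →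
      ∀ y ∈ V, edist y v ≤ r * t →
        ∃ u : X, ∃ w ∈ F u, edist x u ≤ t ∧ edist y w ≤ ℓ * t) :
    ∀ x ∈ U, ∀ t : ℝ≥0∞, t < infEdist x Uᶜ → ∀ y ∈ V,
      (∃ v ∈ F x, edist y v ≤ (r - ℓ) * t) → ∃ u : X, edist x u ≤ t ∧ y ∈ F u := by
  intro x _ t ht y hy ⟨v, hv, hyv⟩
  have hq : ℓ / r < 1 := (ENNReal.div_lt_iff (Or.inl (pos_of_gt hlr).ne') (Or.inl hrtop)).2
    (by rwa [one_mul])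
  have hC : 1 + 2 * (r - ℓ) ≠ ⊤ := by finiteness
  obtain ⟨p, hp, ⟨u, w⟩, huw, hlim⟩ :=
    exists_tendsto_of_forall_exists_step (P := fun p s => p.2 ∈ F p.1 ∧ edist x p.1 + s ≤ t ∧
      edist y p.2 ≤ (r - ℓ) * s) hcomp (fun _ _ h => h.1) hq hC
      (fun _ _ h => exists_graph_step_of_net hlr hrtop hnet ht hy h.1 h.2.1 h.2.2)
      (z₀ := (x, v)) ht.ne_top ⟨hv, by simp, hyv⟩
  have hbound : Tendsto (fun n => (r - ℓ) * ((ℓ / r) ^ n * t)) atTop (𝓝 0) := by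
    simpa using ENNReal.Tendsto.const_mul (ENNReal.Tendsto.mul_const
      (ENNReal.tendsto_pow_atTop_nhds_zero_of_lt_one hq) (Or.inr ht.ne_top))
      (Or.inr (sub_ne_top hrtop))
  have hyw : edist y w ≤ 0 :=
    le_of_tendsto_of_tendsto' (tendsto_const_nhds.edist hlim.snd_nhds) hbound
      fun n => (hp n).2.2
  refine ⟨u, ?_, edist_le_zero.1 hyw ▸ huw⟩
  exact le_of_tendsto' (tendsto_const_nhds.edist hlim.fst_nhds) fun n =>
    le_self_add.trans (hp n).2.1

/-- Density theorem: if for `x ∈ U`, `v ∈ F x`, `t < m(x) = d(x, X∖U)` the set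
`F(B(x,t))` is an `ℓt`-net in `B(v, rt) ∩ V` with `0 ≤ ℓ < r`, then `F` is
Milyutin regular on `U × V` with `sur_m F(U|V) ≥ r − ℓ`. -/
theorem density_theorem {X Y : Type*} [MetricSpace X] [MetricSpace Y]
    (F : X → Set Y) (U : Set X) (V : Set Y) (hU : IsOpen U) (hV : IsOpen V)
    (hcomp : IsComplete {p : X × Y | p.2 ∈ F p.1})
    (r ℓ : ℝ≥0∞) (hlr : ℓ < r) (hrtop : r ≠ ⊤)
    (hnet : ∀ x ∈ U, ∀ v ∈ F x, ∀ t : ℝ≥0∞, t < infEdist x Uᶜ →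
      ∀ y ∈ V, edist y v ≤ r * t →
        ∃ u : X, ∃ w ∈ F u, edist x u ≤ t ∧ edist y w ≤ ℓ * t) :
    ∀ x ∈ U, ∀ t : ℝ≥0∞, t < infEdist x Uᶜ → ∀ y ∈ V,
      (∃ v ∈ F x, edist y v ≤ (r - ℓ) * t) → ∃ u : X, edist x u ≤ t ∧ y ∈ F u :=
  density_theorem_general F U V hcomp r ℓ hlr hrtop hnet
end

section
/- Let X and Y be Banach spaces and F : X → Y strictly differentiable at x̄. Then sur F(x̄) = C(F′(x̄)), where sur F(x̄) is the modulus of surjection (rate of openness) of F near x̄ and C(F′(x̄)) = sup{r ≥ 0 : r·B_Y ⊆ F′(x̄)(B_X)} is the Banach constant of the derivative. -/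
/-! Near `xb`, `F` is a perturbation of `A` with arbitrarily small Lipschitz constant.

If `A '' closedBall 0 1` contains `closedBall 0 ρ`, then `A` has a nonlinear right inverse of
norm `ρ⁻¹`, and Graves' theorem (`ApproximatesLinearOn.surjOn_closedBall_of_nonlinearRightInverse`)
makes `F` open at every rate `s < ρ` uniformly near `xb`.

Conversely, if `F` is open at rate `r` near `xb`, solving `F x' = F xb + t • y` with
`‖x' - xb‖ ≤ t` and letting `t → 0` shows that the closure of `A '' closedBall 0 1` contains
`closedBall 0 r`. The successive-approximation argument of the open mapping theorem, which uses
the completeness of `X`, then shows that `A '' closedBall 0 1` itself contains `closedBall 0 s`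
for every `s < r`.
-/

open ENNReal

/-- The modulus of surjection (rate of openness) of `F` near `xb`: the supremum of
`r ≥ 0` such that for some `ε > 0`, `B(F x, r t) ∩ B(F xb, ε) ⊆ F (B(x,t))` for all
`x` with `‖x − xb‖ < ε` and `0 ≤ t < ε`. -/
noncomputable def surMod {X Y : Type*} [NormedAddCommGroup X] [NormedSpace ℝ X]
    [NormedAddCommGroup Y] [NormedSpace ℝ Y] (F : X → Y) (xb : X) : ℝ≥0∞ :=
  sSup {r : ℝ≥0∞ | ∃ ε : ℝ, 0 < ε ∧ ∀ x : X, ‖x - xb‖ < ε → ∀ t : ℝ, 0 ≤ t → t < ε →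
    ∀ y : Y, (‖y - F x‖₊ : ℝ≥0∞) ≤ r * ENNReal.ofReal t → ‖y - F xb‖ < ε →
      ∃ x' : X, ‖x' - x‖ ≤ t ∧ F x' = y}

open Set Metric Filter Topology
open scoped NNReal

theorem sSup_le_sSup_of_forall_nnreal_lt {S T : Set ℝ≥0∞}
    (h : ∀ (s ρ : ℝ≥0) (r : ℝ≥0∞), r ∈ S → 0 < s → s < ρ → (ρ : ℝ≥0∞) ≤ r → (s : ℝ≥0∞) ∈ T) :
    sSup S ≤ sSup T := by
  refine ENNReal.le_of_forall_nnreal_lt fun s hs => ?_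
  rcases eq_zero_or_pos s with rfl | hs0
  · simp
  obtain ⟨r, hrS, hsr⟩ := lt_sSup_iff.1 hs
  obtain ⟨ρ, hsρ, hρr⟩ := ENNReal.lt_iff_exists_nnreal_btwn.1 hsr
  exact le_sSup (h s ρ r hrS hs0 (ENNReal.coe_lt_coe.1 hsρ) hρr.le)

section

variable {X Y : Type*} [NormedAddCommGroup X] [NormedAddCommGroup Y] [NormedSpace ℝ Y]

def IsSurjectionRate (F : X → Y) (xb : X) (r : ℝ≥0∞) : Prop :=
  ∃ ε : ℝ, 0 < ε ∧ ∀ x : X, ‖x - xb‖ < ε → ∀ t : ℝ, 0 ≤ t → t < ε →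
    ∀ y : Y, (‖y - F x‖₊ : ℝ≥0∞) ≤ r * ENNReal.ofReal t → ‖y - F xb‖ < ε →
      ∃ x' : X, ‖x' - x‖ ≤ t ∧ F x' = y

theorem IsSurjectionRate.eventually_exists_preimage_add_smul {F : X → Y} {xb : X}
    {r : ℝ≥0∞} (hr : IsSurjectionRate F xb r) {ρ : ℝ≥0} (hρr : (ρ : ℝ≥0∞) ≤ r) {y : Y}
    (hy : ‖y‖ ≤ ρ) :
    ∀ᶠ t in 𝓝[>] (0 : ℝ), ∃ x' : X, ‖x' - xb‖ ≤ t ∧ F x' = F xb + t • y := by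
  obtain ⟨ε, hε, H⟩ := hr
  have hsmall : ∀ᶠ t in 𝓝 (0 : ℝ), t < ε ∧ t * ‖y‖ < ε :=
    (eventually_lt_nhds hε).and <|
      ((continuous_mul_const ‖y‖).tendsto' 0 0 (zero_mul _)).eventually (eventually_lt_nhds hε)
  filter_upwards [self_mem_nhdsWithin, nhdsWithin_le_nhds hsmall]
    with t (ht : 0 < t) ⟨htε, htyε⟩
  refine H xb (by simpa) t ht.le htε _ ?_ ?_
  · rw [add_sub_cancel_left, ← enorm_eq_nnnorm, enorm_smul, Real.enorm_eq_ofReal ht.le,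
      mul_comm]
    gcongr
    exact le_trans (by exact_mod_cast hy) hρr
  · rwa [add_sub_cancel_left, norm_smul, Real.norm_of_nonneg ht.le]

variable [NormedSpace ℝ X]

theorem surMod_eq_sSup (F : X → Y) (xb : X) :
    surMod F xb = sSup {r | IsSurjectionRate F xb r} :=
  rfl

namespace ContinuousLinearMap

theorem exists_approx_preimage_norm_le_of_ball (A : X →L[ℝ] Y) {ρ δ : ℝ} (hρ : 0 < ρ)
    (h : ∀ y : Y, ‖y‖ ≤ ρ → ∃ u : X, ‖u‖ ≤ 1 ∧ ‖y - A u‖ ≤ δ) (y : Y) :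
    ∃ u : X, ‖u‖ ≤ ρ⁻¹ * ‖y‖ ∧ ‖y - A u‖ ≤ δ / ρ * ‖y‖ := by
  rcases eq_or_ne y 0 with rfl | hy
  · exact ⟨0, by simp⟩
  have hy : 0 < ‖y‖ := norm_pos_iff.2 hy
  obtain ⟨u, hu, hAu⟩ := h ((ρ / ‖y‖) • y) (by
    rw [norm_smul, Real.norm_of_nonneg (by positivity), div_mul_cancel₀ _ hy.ne'])
  have hscale : y - A ((‖y‖ / ρ) • u) = (‖y‖ / ρ) • ((ρ / ‖y‖) • y - A u) := by
    rw [smul_sub, smul_smul, div_mul_div_cancel₀ hρ.ne', div_self hy.ne', one_smul, map_smul]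
  refine ⟨(‖y‖ / ρ) • u, ?_, ?_⟩
  · rw [norm_smul, Real.norm_of_nonneg (by positivity)]
    calc ‖y‖ / ρ * ‖u‖ ≤ ‖y‖ / ρ * 1 := by gcongr
      _ = ρ⁻¹ * ‖y‖ := by ring
  · rw [hscale, norm_smul, Real.norm_of_nonneg (by positivity)]
    calc ‖y‖ / ρ * ‖(ρ / ‖y‖) • y - A u‖ ≤ ‖y‖ / ρ * δ := by gcongr
      _ = δ / ρ * ‖y‖ := by ring

theorem exists_preimage_norm_le_of_approx [CompleteSpace X] (A : X →L[ℝ] Y) {M q : ℝ}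
    (hM : 0 ≤ M) (hq0 : 0 ≤ q) (hq1 : q < 1)
    (h : ∀ y : Y, ∃ u : X, ‖u‖ ≤ M * ‖y‖ ∧ ‖y - A u‖ ≤ q * ‖y‖) (y : Y) :
    ∃ x : X, ‖x‖ ≤ M / (1 - q) * ‖y‖ ∧ A x = y := by
  choose g hg hAg using h
  -- `v n` is the residual `y - A (g (v 0) + ⋯ + g (v (n - 1)))`.
  set v : ℕ → Y := fun n => (fun z => z - A (g z))^[n] y
  have hv_succ (n : ℕ) : v (n + 1) = v n - A (g (v n)) :=
    Function.iterate_succ_apply' _ n y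
  have hv (n : ℕ) : ‖v n‖ ≤ q ^ n * ‖y‖ := by
    induction n with
    | zero => simp [v]
    | succ n ih =>
      rw [hv_succ, pow_succ', mul_assoc]
      exact (hAg (v n)).trans (by gcongr)
  have hgv (n : ℕ) : ‖g (v n)‖ ≤ M * ‖y‖ * q ^ n :=
    (hg (v n)).trans (by nlinarith [hv n])
  have hgeom : HasSum (fun n => M * ‖y‖ * q ^ n) (M * ‖y‖ * (1 - q)⁻¹) :=
    (hasSum_geometric_of_lt_one hq0 hq1).mul_left _
  have hsum : Summable (fun n => g (v n)) := .of_norm_bounded hgeom.summable hgv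
  refine ⟨∑' n, g (v n), ?_, ?_⟩
  · exact (tsum_of_norm_bounded hgeom hgv).trans_eq (by ring)
  · have hA : HasSum (fun n => A (g (v n))) (A (∑' n, g (v n))) := A.hasSum hsum.hasSum
    have hstep (n : ℕ) : A (g (v n)) = v n - v (n + 1) := by rw [hv_succ, sub_sub_self]
    have hpartial (n : ℕ) : ∑ i ∈ Finset.range n, A (g (v i)) = y - v n := by
      simp only [hstep, Finset.sum_range_sub']
      rfl
    have hv0 : Tendsto v atTop (𝓝 0) :=
      squeeze_zero_norm hv <| by
        simpa using (tendsto_pow_atTop_nhds_zero_of_lt_one hq0 hq1).mul_const ‖y‖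
    refine tendsto_nhds_unique hA.tendsto_sum_nat ?_
    simpa [hpartial] using tendsto_const_nhds.sub hv0

theorem exists_preimage_of_approx_on_ball [CompleteSpace X] (A : X →L[ℝ] Y) {s ρ : ℝ}
    (hs : 0 < s) (hsρ : s < ρ)
    (h : ∀ δ > 0, ∀ y : Y, ‖y‖ ≤ ρ → ∃ u : X, ‖u‖ ≤ 1 ∧ ‖y - A u‖ ≤ δ) {y : Y} (hy : ‖y‖ ≤ s) :
    ∃ x : X, ‖x‖ ≤ 1 ∧ A x = y := by
  have hρ : 0 < ρ := hs.trans hsρ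
  set q := 1 - s / ρ
  have hq0 : 0 < q := sub_pos.2 ((div_lt_one hρ).2 hsρ)
  have hq1 : q < 1 := sub_lt_self _ (div_pos hs hρ)
  have happrox (y : Y) : ∃ u : X, ‖u‖ ≤ ρ⁻¹ * ‖y‖ ∧ ‖y - A u‖ ≤ q * ‖y‖ := by
    simpa [mul_div_cancel_right₀ _ hρ.ne'] using
      A.exists_approx_preimage_norm_le_of_ball hρ (h (q * ρ) (by positivity)) y
  obtain ⟨x, hx, hAx⟩ :=
    A.exists_preimage_norm_le_of_approx (inv_nonneg.2 hρ.le) hq0.le hq1 happrox y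
  refine ⟨x, hx.trans ?_, hAx⟩
  calc ρ⁻¹ / (1 - q) * ‖y‖ = ‖y‖ / s := by rw [sub_sub_self]; field_simp
    _ ≤ 1 := (div_le_one hs).2 hy

theorem exists_nonlinearRightInverse_nnnorm_eq (A : X →L[ℝ] Y) {ρ : ℝ≥0} (hρ : 0 < ρ)
    (h : ∀ y : Y, ‖y‖ ≤ ρ → ∃ x : X, ‖x‖ ≤ 1 ∧ A x = y) :
    ∃ g : A.NonlinearRightInverse, g.nnnorm = ρ⁻¹ := by
  have hexact (y : Y) : ∃ x : X, ‖x‖ ≤ ρ⁻¹ * ‖y‖ ∧ A x = y := by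
    obtain ⟨x, hx, hAx⟩ := A.exists_approx_preimage_norm_le_of_ball (δ := 0) hρ
      (fun y hy => (h y hy).imp fun x hx => ⟨hx.1, by simp [hx.2]⟩) y
    exact ⟨x, hx, (sub_eq_zero.1 (norm_le_zero_iff.1 (by simpa using hAx))).symm⟩
  choose g hg hAg using hexact
  exact ⟨⟨g, ρ⁻¹, by simpa using hg, hAg⟩, rfl⟩

end ContinuousLinearMap

theorem IsSurjectionRate.exists_approx_preimage_deriv {F : X → Y} {xb : X} {r : ℝ≥0∞}
    (hr : IsSurjectionRate F xb r) {A : X →L[ℝ] Y} (hF : HasStrictFDerivAt F A xb) {ρ : ℝ≥0}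
    (hρr : (ρ : ℝ≥0∞) ≤ r) {δ : ℝ} (hδ : 0 < δ) {y : Y} (hy : ‖y‖ ≤ ρ) :
    ∃ u : X, ‖u‖ ≤ 1 ∧ ‖y - A u‖ ≤ δ := by
  obtain ⟨U, hU, hFU⟩ := hF.approximates_deriv_on_nhds (c := ⟨δ, hδ.le⟩) (Or.inr hδ)
  obtain ⟨η, hη, hηU⟩ := Metric.mem_nhds_iff.1 hU
  obtain ⟨t, ⟨x', hx't, hFx'⟩, htη, ht⟩ := ((hr.eventually_exists_preimage_add_smul hρr hy).and
    ((eventually_nhdsWithin_of_eventually_nhds (eventually_lt_nhds hη)).and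
      self_mem_nhdsWithin)).exists
  have hx'U : x' ∈ U := hηU (mem_ball_iff_norm.2 (hx't.trans_lt htη))
  have happrox : ‖t • y - A (x' - xb)‖ ≤ δ * ‖x' - xb‖ := by
    have := hFU x' hx'U xb (mem_of_mem_nhds hU)
    rwa [hFx', add_sub_cancel_left] at this
  refine ⟨t⁻¹ • (x' - xb), ?_, ?_⟩
  · rw [norm_smul, Real.norm_of_nonneg (inv_nonneg.2 ht.le)]
    exact inv_mul_le_one_of_le₀ hx't ht.le
  · calc ‖y - A (t⁻¹ • (x' - xb))‖ = t⁻¹ * ‖t • y - A (x' - xb)‖ := by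
          rw [map_smul, ← norm_smul_of_nonneg (inv_nonneg.2 ht.le), smul_sub, smul_smul,
            inv_mul_cancel₀ ht.ne', one_smul]
      _ ≤ t⁻¹ * (δ * t) := by gcongr; exact happrox.trans (by gcongr)
      _ = δ := by field_simp

theorem HasStrictFDerivAt.isSurjectionRate [CompleteSpace X] {F : X → Y} {xb : X}
    {A : X →L[ℝ] Y} (hF : HasStrictFDerivAt F A xb) (g : A.NonlinearRightInverse) {s : ℝ≥0}
    (hs : (s : ℝ) < (g.nnnorm : ℝ)⁻¹) : IsSurjectionRate F xb s := by
  -- chosen so that the radius `(‖g‖⁻¹ - c) * t` in Graves' theorem is `s * t`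
  set c : ℝ≥0 := ⟨(g.nnnorm : ℝ)⁻¹ - s, by linarith⟩
  obtain ⟨U, hU, hFU⟩ := hF.approximates_deriv_on_nhds (c := c) (Or.inr (sub_pos.2 hs))
  obtain ⟨η, hη, hηU⟩ := Metric.mem_nhds_iff.1 hU
  refine ⟨η / 2, half_pos hη, fun x hx t ht htη y hy _ => ?_⟩
  have hball : closedBall x t ⊆ U := fun z hz => hηU <| by
    rw [mem_ball_iff_norm, ← sub_add_sub_cancel z x xb]
    calc ‖z - x + (x - xb)‖ ≤ ‖z - x‖ + ‖x - xb‖ := norm_add_le _ _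
      _ < η := by linarith [mem_closedBall_iff_norm.1 hz]
  have hy : y ∈ closedBall (F x) (((g.nnnorm : ℝ)⁻¹ - c) * t) := by
    have hc : (c : ℝ) = (g.nnnorm : ℝ)⁻¹ - s := rfl
    rw [mem_closedBall_iff_norm, hc, sub_sub_self]
    rwa [ENNReal.ofReal, ← ENNReal.coe_mul, ENNReal.coe_le_coe, ← NNReal.coe_le_coe, coe_nnnorm,
      NNReal.coe_mul, Real.coe_toNNReal _ ht] at hy
  obtain ⟨x', hx', rfl⟩ := hFU.surjOn_closedBall_of_nonlinearRightInverse g ht hball hy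
  exact ⟨x', mem_closedBall_iff_norm.1 hx', rfl⟩

end

theorem lyusternik_graves_general {X Y : Type*} [NormedAddCommGroup X] [NormedSpace ℝ X]
    [CompleteSpace X] [NormedAddCommGroup Y] [NormedSpace ℝ Y]
    (F : X → Y) (xb : X) (A : X →L[ℝ] Y) (hF : HasStrictFDerivAt F A xb) :
    surMod F xb = BanachConstant A := by
  rw [surMod_eq_sSup]
  apply le_antisymm
  · refine sSup_le_sSup_of_forall_nnreal_lt fun s ρ r hr hs hsρ hρr y hy => ?_
    exact A.exists_preimage_of_approx_on_ball hs hsρ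
      (fun δ hδ z hz => hr.exists_approx_preimage_deriv hF hρr hδ hz)
      (by exact_mod_cast hy)
  · refine sSup_le_sSup_of_forall_nnreal_lt fun s ρ r hr hs hsρ hρr => ?_
    obtain ⟨g, hg⟩ := A.exists_nonlinearRightInverse_nnnorm_eq (hs.trans hsρ)
      fun y hy => hr y (le_trans (by exact_mod_cast hy) hρr)
    exact hF.isSurjectionRate g (by simpa [hg] using hsρ)

/-- Lyusternik–Graves theorem: for a mapping between Banach spaces strictly
differentiable at `xb`, `sur F(xb) = C(F'(xb))`. -/
theorem lyusternik_graves {X Y : Type*} [NormedAddCommGroup X] [NormedSpace ℝ X]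
    [CompleteSpace X] [NormedAddCommGroup Y] [NormedSpace ℝ Y] [CompleteSpace Y]
    (F : X → Y) (xb : X) (A : X →L[ℝ] Y) (hF : HasStrictFDerivAt F A xb) :
    surMod F xb = BanachConstant A :=
  lyusternik_graves_general F xb A hF
end

section
/- Let F : X ⇒ Y be a set-valued mapping between metric spaces and (x̄, ȳ) ∈ graph F. Then F is strongly metrically regular near (x̄, ȳ) if and only if F⁻¹ has a Lipschitz localization near (ȳ, x̄), i.e., there exist ε, δ > 0 such that y ↦ F⁻¹(y) ∩ B(x̄, ε) is single-valued and Lipschitz continuous on B(ȳ, δ). -/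
open EMetric ENNReal NNReal

/-!
If `F` is strongly metrically regular, the regularity estimate with `y ∈ F x ∩ F u` forces
`x = u`, so the surjectivity condition selects a single-valued inverse `G`; taking
`y ∈ F (G y')` in the estimate gives `d(G y, G y') ≤ K d(y, y')`.

Conversely, if `G` is a Lipschitz localization on `B(ȳ, δ)`, fix `y ∈ B(ȳ, δ/2)` and `y' ∈ F x`.
If `y' ∈ B(ȳ, δ)` then `x = G y'` and the Lipschitz bound applies; otherwise `d(y, y') ≥ δ/2`
while `d(x, u) ≤ 2ε`, so the constant `K + 4ε/δ` works in both cases.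
-/

theorem edist_le_mul_infEDist_of_forall_dist_le {X Y : Type*} [PseudoMetricSpace X]
    [PseudoMetricSpace Y] {x u : X} {y : Y} {s : Set Y} {K : ℝ≥0} (hK : K ≠ 0)
    (h : ∀ z ∈ s, dist x u ≤ K * dist y z) : edist x u ≤ K * Metric.infEDist y s := by
  simp_rw [Metric.infEDist, ENNReal.mul_iInf_of_ne (ENNReal.coe_ne_zero.mpr hK)
    ENNReal.coe_ne_top]
  refine le_iInf₂ fun z hz => ?_
  rw [edist_nndist, edist_nndist, ← ENNReal.coe_mul, ENNReal.coe_le_coe, ← NNReal.coe_le_coe]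
  exact h z hz

theorem dist_le_mul_of_mem_closedBall {X Y : Type*} [PseudoMetricSpace X] [PseudoMetricSpace Y]
    {xb x u : X} {y z : Y} {ε δ : ℝ} (hδ : 0 < δ) (hx : x ∈ Metric.closedBall xb ε)
    (hu : u ∈ Metric.closedBall xb ε) (hyz : δ / 2 ≤ dist y z) :
    dist x u ≤ 4 * ε / δ * dist y z := by
  have hε : 0 ≤ ε := Metric.nonempty_closedBall.mp ⟨x, hx⟩
  calc dist x u ≤ 2 * ε := by
        have := dist_triangle_right x u xb
        rw [Metric.mem_closedBall] at hx hu
        linarith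
    _ = 4 * ε / δ * (δ / 2) := by field_simp; ring
    _ ≤ 4 * ε / δ * dist y z := by gcongr

namespace SetValued

variable {X Y : Type*} [MetricSpace X] [MetricSpace Y]

def StronglyMetricallyRegularWith (F : X → Set Y) (xb : X) (yb : Y) (ε δ : ℝ) (K : ℝ≥0) :
    Prop :=
  (∀ y ∈ Metric.closedBall yb δ, ∃ x ∈ Metric.closedBall xb ε, y ∈ F x) ∧
    ∀ x ∈ Metric.closedBall xb ε, ∀ u ∈ Metric.closedBall xb ε,
      ∀ y ∈ F u, y ∈ Metric.closedBall yb δ → edist x u ≤ (K : ℝ≥0∞) * Metric.infEDist y (F x)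

def IsLipschitzLocalizationWith (F : X → Set Y) (xb : X) (yb : Y) (ε δ : ℝ) (K : ℝ≥0)
    (G : Y → X) : Prop :=
  LipschitzOnWith K G (Metric.closedBall yb δ) ∧
    ∀ y ∈ Metric.closedBall yb δ, {x : X | y ∈ F x} ∩ Metric.closedBall xb ε = {G y}

variable {F : X → Set Y} {xb : X} {yb : Y} {ε δ : ℝ} {K : ℝ≥0}

namespace StronglyMetricallyRegularWith

theorem eq_of_mem (h : StronglyMetricallyRegularWith F xb yb ε δ K) {x u : X} {y : Y}
    (hx : x ∈ Metric.closedBall xb ε) (hu : u ∈ Metric.closedBall xb ε)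
    (hy : y ∈ Metric.closedBall yb δ) (hyx : y ∈ F x) (hyu : y ∈ F u) : x = u := by
  have hxu := h.2 x hx u hu y hyu hy
  rwa [Metric.infEDist_zero_of_mem hyx, mul_zero, nonpos_iff_eq_zero, edist_eq_zero] at hxu

theorem exists_isLipschitzLocalizationWith (h : StronglyMetricallyRegularWith F xb yb ε δ K) :
    ∃ G, IsLipschitzLocalizationWith F xb yb ε δ K G := by
  have : Nonempty X := ⟨xb⟩
  choose! G hG_mem hG_inv using h.1
  refine ⟨G, fun y₁ hy₁ y₂ hy₂ => ?_, fun y hy => ?_⟩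
  · calc edist (G y₁) (G y₂) ≤ K * Metric.infEDist y₂ (F (G y₁)) :=
          h.2 _ (hG_mem y₁ hy₁) _ (hG_mem y₂ hy₂) y₂ (hG_inv y₂ hy₂) hy₂
      _ ≤ K * edist y₁ y₂ := by
          rw [edist_comm]
          exact mul_le_mul_right (Metric.infEDist_le_edist_of_mem (hG_inv y₁ hy₁)) _
  · ext x
    constructor
    · rintro ⟨hyx, hx⟩
      exact h.eq_of_mem hx (hG_mem y hy) hy hyx (hG_inv y hy)
    · rintro rfl
      exact ⟨hG_inv y hy, hG_mem y hy⟩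

end StronglyMetricallyRegularWith

namespace IsLipschitzLocalizationWith

variable {G : Y → X}

theorem eq_of_mem (h : IsLipschitzLocalizationWith F xb yb ε δ K G) {x : X} {y : Y}
    (hy : y ∈ Metric.closedBall yb δ) (hx : x ∈ Metric.closedBall xb ε) (hyx : y ∈ F x) :
    x = G y := by
  have : x ∈ {x : X | y ∈ F x} ∩ Metric.closedBall xb ε := ⟨hyx, hx⟩
  rwa [h.2 y hy] at this

theorem mem_closedBall_and_mem (h : IsLipschitzLocalizationWith F xb yb ε δ K G) {y : Y}
    (hy : y ∈ Metric.closedBall yb δ) : G y ∈ Metric.closedBall xb ε ∧ y ∈ F (G y) := by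
  have : G y ∈ {x : X | y ∈ F x} ∩ Metric.closedBall xb ε := by
    rw [h.2 y hy]
    rfl
  exact ⟨this.2, this.1⟩

theorem stronglyMetricallyRegularWith (hε : 0 < ε) (hδ : 0 < δ)
    (h : IsLipschitzLocalizationWith F xb yb ε δ K G) :
    StronglyMetricallyRegularWith F xb yb ε (δ / 2) (K + (4 * ε / δ).toNNReal) := by
  have hball : Metric.closedBall yb (δ / 2) ⊆ Metric.closedBall yb δ :=
    Metric.closedBall_subset_closedBall (by linarith)
  refine ⟨fun y hy => ?_, fun x hx u hu y hyu hy => ?_⟩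
  · obtain ⟨hGy, hyG⟩ := h.mem_closedBall_and_mem (hball hy)
    exact ⟨G y, hGy, hyG⟩
  have hK : K + (4 * ε / δ).toNNReal ≠ 0 :=
    (add_pos_of_nonneg_of_pos zero_le (Real.toNNReal_pos.mpr (by positivity))).ne'
  refine edist_le_mul_infEDist_of_forall_dist_le hK fun z hzx => ?_
  push_cast
  rw [Real.coe_toNNReal _ (by positivity), add_mul]
  by_cases hz : z ∈ Metric.closedBall yb δ
  · have hGz : dist x u ≤ K * dist y z := by
      rw [h.eq_of_mem hz hx hzx, h.eq_of_mem (hball hy) hu hyu, dist_comm y]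
      exact h.1.dist_le_mul z hz y (hball hy)
    have : 0 ≤ 4 * ε / δ * dist y z := by positivity
    linarith
  · have hfar : δ / 2 ≤ dist y z := by
      rw [Metric.mem_closedBall, not_le] at hz
      rw [Metric.mem_closedBall] at hy
      linarith [dist_triangle_left z yb y]
    have := dist_le_mul_of_mem_closedBall hδ hx hu hfar
    have : 0 ≤ K * dist y z := by positivity
    linarith

end IsLipschitzLocalizationWith

end SetValued

open SetValued in
theorem strong_regularity_iff_lipschitz_localization_general {X Y : Type*}
    [MetricSpace X] [MetricSpace Y]
    (F : X → Set Y) (xb : X) (yb : Y) :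
    (∃ ε > (0:ℝ), ∃ δ > (0:ℝ), ∃ K : ℝ≥0,
      (∀ y ∈ Metric.closedBall yb δ, ∃ x ∈ Metric.closedBall xb ε, y ∈ F x) ∧
      (∀ x ∈ Metric.closedBall xb ε, ∀ u ∈ Metric.closedBall xb ε,
        ∀ y ∈ F u, y ∈ Metric.closedBall yb δ →
          edist x u ≤ (K : ℝ≥0∞) * infEdist y (F x)))
    ↔
    (∃ ε > (0:ℝ), ∃ δ > (0:ℝ), ∃ G : Y → X, ∃ K : ℝ≥0,
      LipschitzOnWith K G (Metric.closedBall yb δ) ∧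
      ∀ y ∈ Metric.closedBall yb δ,
        {x : X | y ∈ F x} ∩ Metric.closedBall xb ε = {G y}) := by
  constructor
  · rintro ⟨ε, hε, δ, hδ, K, hreg⟩
    obtain ⟨G, hG⟩ := StronglyMetricallyRegularWith.exists_isLipschitzLocalizationWith hreg
    exact ⟨ε, hε, δ, hδ, G, K, hG⟩
  · rintro ⟨ε, hε, δ, hδ, G, K, hG⟩
    exact ⟨ε, hε, δ / 2, by positivity, _,
      IsLipschitzLocalizationWith.stronglyMetricallyRegularWith hε hδ hG⟩

/-- Strong metric regularity is equivalent to existence of a Lipschitz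
localization of the inverse: `F` is strongly metrically regular near
`(xb, yb) ∈ graph F` iff there are `ε, δ > 0` such that
`y ↦ F⁻¹(y) ∩ B(xb, ε)` is single-valued and Lipschitz on `B(yb, δ)`. -/
theorem strong_regularity_iff_lipschitz_localization {X Y : Type*}
    [MetricSpace X] [MetricSpace Y]
    (F : X → Set Y) (xb : X) (yb : Y) (hxy : yb ∈ F xb) :
    (∃ ε > (0:ℝ), ∃ δ > (0:ℝ), ∃ K : ℝ≥0,
      (∀ y ∈ Metric.closedBall yb δ, ∃ x ∈ Metric.closedBall xb ε, y ∈ F x) ∧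
      (∀ x ∈ Metric.closedBall xb ε, ∀ u ∈ Metric.closedBall xb ε,
        ∀ y ∈ F u, y ∈ Metric.closedBall yb δ →
          edist x u ≤ (K : ℝ≥0∞) * infEdist y (F x)))
    ↔
    (∃ ε > (0:ℝ), ∃ δ > (0:ℝ), ∃ G : Y → X, ∃ K : ℝ≥0,
      LipschitzOnWith K G (Metric.closedBall yb δ) ∧
      ∀ y ∈ Metric.closedBall yb δ,
        {x : X | y ∈ F x} ∩ Metric.closedBall xb ε = {G y}) :=
  strong_regularity_iff_lipschitz_localization_general F xb yb
end

section
/- Let X and Y be Banach spaces and F : X ⇒ Y a homogeneous set-valued mapping. If F is metrically regular near (0,0), then F is globally metrically regular with the same rate: d(x, F⁻¹(y)) ≤ K d(y, F(x)) for all x ∈ X, y ∈ Y, where K is any regularity constant valid near (0,0). -/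
/-!
Metric regularity is invariant under scaling of the graph: if `gph F` is a cone, the
inequality at `(t • x, t • y)` is the inequality at `(x, y)` multiplied on both sides by `t`.
Every pair `(x, y)` is brought into the `ε`-ball around the origin by a small `t > 0`.
-/

open EMetric Metric ENNReal Pointwise Filter Topology

section PositivelyHomogeneous

variable {X Y : Type*} [NormedAddCommGroup X] [NormedSpace ℝ X]
  [NormedAddCommGroup Y] [NormedSpace ℝ Y] {F : X → Set Y}
  (hF : ∀ t : ℝ, 0 < t → ∀ x y, y ∈ F x → t • y ∈ F (t • x))
include hF

theorem smul_setOf_mem_eq_of_pos_smul {t : ℝ} (ht : 0 < t) (y : Y) :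
    t • {u : X | y ∈ F u} = {u : X | t • y ∈ F u} := by
  ext u
  constructor
  · rintro ⟨v, hv, rfl⟩
    exact hF t ht v y hv
  · intro hu
    refine ⟨t⁻¹ • u, ?_, smul_inv_smul₀ ht.ne' u⟩
    simpa only [Set.mem_ofPred_eq, inv_smul_smul₀ ht.ne'] using hF t⁻¹ (inv_pos.mpr ht) u (t • y) hu

theorem smul_subset_of_pos_smul {t : ℝ} (ht : 0 < t) (x : X) : t • F x ⊆ F (t • x) := by
  rintro _ ⟨w, hw, rfl⟩
  exact hF t ht x w hw

theorem infEDist_le_of_smul {K : ℝ≥0∞} {t : ℝ} (ht : 0 < t) {x : X} {y : Y}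
    (h : infEDist (t • x) {u | t • y ∈ F u} ≤ K * infEDist (t • y) (F (t • x))) :
    infEDist x {u | y ∈ F u} ≤ K * infEDist y (F x) := by
  have ht₀ : (‖t‖₊ : ℝ≥0∞) ≠ 0 := by simp [ht.ne']
  refine (ENNReal.mul_le_mul_iff_right ht₀ ENNReal.coe_ne_top).mp ?_
  calc (‖t‖₊ : ℝ≥0∞) * infEDist x {u | y ∈ F u}
      = infEDist (t • x) {u | t • y ∈ F u} := by
        rw [← smul_setOf_mem_eq_of_pos_smul hF ht, infEDist_smul₀ ht.ne', ENNReal.smul_def,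
          smul_eq_mul]
    _ ≤ K * infEDist (t • y) (F (t • x)) := h
    _ ≤ K * infEDist (t • y) (t • F x) := by
        gcongr
        exact smul_subset_of_pos_smul hF ht x
    _ = ‖t‖₊ * (K * infEDist y (F x)) := by
        rw [infEDist_smul₀ ht.ne', ENNReal.smul_def, smul_eq_mul, mul_left_comm]

end PositivelyHomogeneous

theorem eventually_norm_smul_lt {E : Type*} [NormedAddCommGroup E] [NormedSpace ℝ E]
    (x : E) {ε : ℝ} (hε : 0 < ε) : ∀ᶠ t in 𝓝[>] (0 : ℝ), ‖t • x‖ < ε := by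
  have hlim : Tendsto (fun t : ℝ => t • x) (𝓝 0) (𝓝 0) := by
    simpa using (tendsto_id (x := 𝓝 (0 : ℝ))).smul_const x
  exact nhdsWithin_le_nhds (hlim.norm.eventually (gt_mem_nhds (by simpa using hε)))

theorem homogeneous_regularity_global_general {X Y : Type*}
    [NormedAddCommGroup X] [NormedSpace ℝ X]
    [NormedAddCommGroup Y] [NormedSpace ℝ Y]
    (F : X → Set Y)
    (hcone : ∀ t : ℝ, 0 < t → ∀ x y, y ∈ F x → t • y ∈ F (t • x))
    (K : ℝ≥0∞) (ε : ℝ) (hε : 0 < ε)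
    (hreg : ∀ x : X, ∀ y : Y, ‖x‖ < ε → ‖y‖ < ε →
      infEdist x {u : X | y ∈ F u} ≤ K * infEdist y (F x)) :
    ∀ x : X, ∀ y : Y, infEdist x {u : X | y ∈ F u} ≤ K * infEdist y (F x) := by
  intro x y
  obtain ⟨t, ⟨htx, hty⟩, ht⟩ :=
    (((eventually_norm_smul_lt x hε).and (eventually_norm_smul_lt y hε)).and
      self_mem_nhdsWithin).exists
  exact infEDist_le_of_smul hcone ht (hreg _ _ htx hty)

/-- A homogeneous set-valued mapping between Banach spaces that is metrically
regular near `(0,0)` with constant `K` is globally metrically regular with the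
same constant: `d(x, F⁻¹ y) ≤ K d(y, F x)` for all `x, y`. -/
theorem homogeneous_regularity_global {X Y : Type*}
    [NormedAddCommGroup X] [NormedSpace ℝ X] [CompleteSpace X]
    [NormedAddCommGroup Y] [NormedSpace ℝ Y] [CompleteSpace Y]
    (F : X → Set Y) (h0 : (0 : Y) ∈ F 0)
    (hcone : ∀ t : ℝ, 0 < t → ∀ x y, y ∈ F x → t • y ∈ F (t • x))
    (K : ℝ≥0∞) (ε : ℝ) (hε : 0 < ε)
    (hreg : ∀ x : X, ∀ y : Y, ‖x‖ < ε → ‖y‖ < ε →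
      infEdist x {u : X | y ∈ F u} ≤ K * infEdist y (F x)) :
    ∀ x : X, ∀ y : Y, infEdist x {u : X | y ∈ F u} ≤ K * infEdist y (F x) :=
  homogeneous_regularity_global_general F hcone K ε hε hreg
end

section
/- Let X be a complete metric space, U ⊆ X open, and f : X → ℝ ∪ {+∞} lower semicontinuous. Suppose |∇f|(x) > r > 0 for every x ∈ U with f(x) > 0. Then for every x̄ ∈ U with f(x̄) < r · d(x̄, X∖U), there exists ū with f(ū) ≤ 0 and d(ū, x̄) ≤ r⁻¹ · max(f(x̄), 0). -/
/-!
Apply Ekeland's variational principle to `f⁺` with constant `r`, starting at `x̄`. The point `ū`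
it produces satisfies `f(ū)⁺ + r d(x̄, ū) ≤ f(x̄)⁺`, so it lies within `r⁻¹ f(x̄)⁺ < d(x̄, X∖U)` of
`x̄`, hence in `U`, as soon as `f(ū) > 0`. But `ū` strictly minimizes `f⁺ + r d(ū, ·)`, and since
`f > 0` near `ū` this bounds the strong slope of `f` at `ū` by `r`, contradicting the hypothesis.
So `f(ū) ≤ 0`.
-/

open EMetric ENNReal Filter Topology

/-- The strong slope `|∇f|(x) = limsup_{u → x, u ≠ x} (f x − f u)⁺ / d(x,u)`,
with `|∇f|(x) = ∞` if `f x = ∞`. -/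
noncomputable def strongSlope {X : Type*} [MetricSpace X] (f : X → EReal) (x : X) : ℝ≥0∞ :=
  if f x = ⊤ then ⊤
  else limsup (fun u => ENNReal.ofReal ((f x - f u).toReal / dist x u)) (𝓝[≠] x)

/-- The positive part `a⁺` of an extended real, as an extended nonnegative real. -/
noncomputable def erealPos (a : EReal) : ℝ≥0∞ :=
  if a = ⊤ then ⊤ else ENNReal.ofReal a.toReal

section Ekeland

variable {X : Type*} [MetricSpace X] {g : X → ℝ≥0∞} {c : ℝ≥0∞}

def BrondstedLE (g : X → ℝ≥0∞) (c : ℝ≥0∞) (u z : X) : Prop :=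
  g u + c * edist z u ≤ g z

theorem brondstedLE_refl (g : X → ℝ≥0∞) (c : ℝ≥0∞) (z : X) : BrondstedLE g c z z := by
  simp [BrondstedLE]

theorem BrondstedLE.trans {u v w : X} (huv : BrondstedLE g c u v) (hvw : BrondstedLE g c v w) :
    BrondstedLE g c u w :=
  calc g u + c * edist w u ≤ g u + c * (edist w v + edist v u) := by
        gcongr; exact edist_triangle _ _ _
    _ = (g u + c * edist v u) + c * edist w v := by ring
    _ ≤ g v + c * edist w v := by gcongr; exact huv
    _ ≤ g w := hvw

theorem BrondstedLE.apply_le {u z : X} (h : BrondstedLE g c u z) : g u ≤ g z :=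
  le_self_add.trans h

theorem isClosed_setOf_brondstedLE (hg : LowerSemicontinuous g) (hc : c ≠ ⊤) (z : X) :
    IsClosed {u | BrondstedLE g c u z} :=
  (hg.add ((ENNReal.continuous_const_mul hc).comp
    (continuous_const.edist continuous_id)).lowerSemicontinuous).isClosed_preimage (g z)

theorem exists_brondstedLE_forall_le_add {ε : ℝ≥0∞} (hε : ε ≠ 0) (z : X) :
    ∃ z', BrondstedLE g c z' z ∧ ∀ u, BrondstedLE g c u z → g z' ≤ g u + ε := by
  set m := ⨅ u : {u // BrondstedLE g c u z}, g u
  by_cases hm : m = ⊤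
  · refine ⟨z, brondstedLE_refl g c z, fun u hu => ?_⟩
    have : g u = ⊤ := top_le_iff.1 (hm ▸ iInf_le _ (⟨u, hu⟩ : {u // BrondstedLE g c u z}))
    simp [this]
  obtain ⟨⟨z', hz'⟩, hlt⟩ := iInf_lt_iff.1 (ENNReal.lt_add_right hm hε)
  exact ⟨z', hz', fun u hu => hlt.le.trans
    (add_le_add_left (iInf_le _ (⟨u, hu⟩ : {u // BrondstedLE g c u z})) _)⟩

theorem exists_seq_brondstedLE (hc0 : c ≠ 0) (hct : c ≠ ⊤) {x₀ : X} (hx₀ : g x₀ ≠ ⊤) :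
    ∃ x : ℕ → X, x 0 = x₀ ∧ (∀ n, BrondstedLE g c (x (n + 1)) (x n)) ∧
      ∀ n u, BrondstedLE g c u (x (n + 1)) → dist (x (n + 1)) u ≤ 1 / (n + 1) := by
  choose F hF hFmin using fun n : ℕ => exists_brondstedLE_forall_le_add (g := g) (c := c)
    (mul_ne_zero hc0 (ENNReal.ofReal_pos.2 (Nat.one_div_pos_of_nat (α := ℝ) (n := n))).ne')
  -- Choosing `x (n + 1)` as a `c / (n + 1)`-minimizer of `g` below `x n` confines every point
  -- below `x (n + 1)` to the ball of radius `1 / (n + 1)` around it.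
  let x : ℕ → X := fun n => Nat.rec x₀ F n
  have hstep : ∀ n, BrondstedLE g c (x (n + 1)) (x n) := fun n => hF n (x n)
  have hfin : ∀ n, g (x n) ≠ ⊤ := by
    intro n
    induction n with
    | zero => exact hx₀
    | succ n ih => exact ne_top_of_le_ne_top ih (hstep n).apply_le
  refine ⟨x, rfl, hstep, fun n u hu => ?_⟩
  have hgu : g u ≠ ⊤ := ne_top_of_le_ne_top (hfin (n + 1)) hu.apply_le
  have h : g u + c * edist (x (n + 1)) u ≤ g u + c * ENNReal.ofReal (1 / (n + 1)) :=
    le_trans hu (hFmin n (x n) u (hu.trans (hstep n)))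
  rwa [ENNReal.add_le_add_iff_left hgu, ENNReal.mul_le_mul_iff_right hc0 hct,
    edist_le_ofReal Nat.one_div_pos_of_nat.le] at h

/-- Ekeland's variational principle. -/
theorem LowerSemicontinuous.exists_brondstedLE_minimal [CompleteSpace X]
    (hg : LowerSemicontinuous g) (hc0 : c ≠ 0) (hct : c ≠ ⊤) {x₀ : X} (hx₀ : g x₀ ≠ ⊤) :
    ∃ y, BrondstedLE g c y x₀ ∧ ∀ u, BrondstedLE g c u y → u = y := by
  obtain ⟨x, rfl, hstep, hrad⟩ := exists_seq_brondstedLE hc0 hct hx₀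
  have hmono : ∀ n k, n ≤ k → BrondstedLE g c (x k) (x n) := by
    intro n k hnk
    induction k, hnk using Nat.le_induction with
    | base => exact brondstedLE_refl g c _
    | succ k _ ih => exact (hstep k).trans ih
  have hcauchy : CauchySeq x := by
    refine Metric.cauchySeq_iff'.2 fun ε hε => ?_
    obtain ⟨N, hN⟩ := exists_nat_one_div_lt hε
    exact ⟨N + 1, fun k hk => by rw [dist_comm]; exact (hrad N _ (hmono _ _ hk)).trans_lt hN⟩
  obtain ⟨y, hy⟩ := cauchySeq_tendsto_of_complete hcauchy
  have hyx : ∀ n, BrondstedLE g c y (x n) := fun n =>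
    (isClosed_setOf_brondstedLE hg hct (x n)).mem_of_tendsto hy (eventually_atTop.2 ⟨n, hmono n⟩)
  refine ⟨y, hyx 0, fun u hu => dist_le_zero.1 ?_⟩
  have hlim : Tendsto (fun n : ℕ => 2 * (1 / ((n : ℝ) + 1))) atTop (𝓝 0) := by
    simpa using tendsto_one_div_add_atTop_nhds_zero_nat.const_mul (2 : ℝ)
  refine ge_of_tendsto' hlim fun n => ?_
  calc dist u y ≤ dist (x (n + 1)) u + dist (x (n + 1)) y := dist_triangle_left _ _ _
    _ ≤ 1 / (n + 1) + 1 / (n + 1) := add_le_add (hrad n u (hu.trans (hyx _))) (hrad n y (hyx _))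
    _ = 2 * (1 / (n + 1)) := by ring

end Ekeland

theorem strongSlope_le_of_eventually_le_add {X : Type*} [MetricSpace X] {f : X → EReal} {y : X}
    {c : ℝ≥0∞} (hfy : f y ≠ ⊤) (hpos : ∀ᶠ u in 𝓝 y, 0 ≤ f u)
    (hle : ∀ᶠ u in 𝓝[≠] y, (f y).toENNReal ≤ (f u).toENNReal + c * edist y u) :
    strongSlope f y ≤ c := by
  rw [strongSlope, if_neg hfy]
  refine limsup_le_of_le (by isBoundedDefault) ?_
  filter_upwards [nhdsWithin_le_nhds hpos, hle, self_mem_nhdsWithin] with u hu hyu hne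
  have hd : 0 < dist y u := dist_pos.2 (Ne.symm hne)
  have hsub : f y - f u ≠ ⊤ :=
    ne_top_of_le_ne_top hfy ((EReal.sub_le_sub le_rfl hu).trans_eq (sub_zero _))
  rw [ENNReal.ofReal_div_of_pos hd, ← edist_dist, ← EReal.toENNReal_of_ne_top hsub,
    EReal.toENNReal_sub hu]
  exact ENNReal.div_le_of_le_mul (tsub_le_iff_left.2 hyu)

theorem LowerSemicontinuous.ereal_toENNReal {α : Type*} [TopologicalSpace α] {f : α → EReal}
    (hf : LowerSemicontinuous f) : LowerSemicontinuous fun x => (f x).toENNReal :=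
  EReal.continuous_toENNReal.comp_lowerSemicontinuous hf fun _ _ => EReal.toENNReal_le_toENNReal

theorem erealPos_eq_toENNReal (a : EReal) : erealPos a = a.toENNReal := rfl

theorem basic_error_bound_lemma_general {X : Type*} [MetricSpace X] [CompleteSpace X]
    (U : Set X) (f : X → EReal)
    (hlsc : LowerSemicontinuous f)
    (r : ℝ) (hr : 0 < r)
    (hslope : ∀ x ∈ U, 0 < f x → ENNReal.ofReal r < strongSlope f x)
    (xb : X)
    (hsmall : f xb < ((ENNReal.ofReal r * infEdist xb Uᶜ : ℝ≥0∞) : EReal)) :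
    ∃ ub : X, f ub ≤ 0 ∧ ENNReal.ofReal r * edist xb ub ≤ erealPos (f xb) := by
  simp only [erealPos_eq_toENNReal]
  have hfxb : (f xb).toENNReal ≠ ⊤ := EReal.toENNReal_ne_top_iff.2 (ne_top_of_lt hsmall)
  obtain ⟨y, hyxb, hymin⟩ := hlsc.ereal_toENNReal.exists_brondstedLE_minimal
    (ENNReal.ofReal_pos.2 hr).ne' ENNReal.ofReal_ne_top hfxb
  have hdist : ENNReal.ofReal r * edist xb y ≤ (f xb).toENNReal := le_add_self.trans hyxb
  refine ⟨y, ?_, hdist⟩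
  by_contra! hfy
  have hyU : y ∈ U := by
    by_contra hyU
    have hlt : ENNReal.ofReal r * edist xb y < (f xb).toENNReal :=
      (ENNReal.lt_add_right (ne_top_of_le_ne_top hfxb hdist)
        (EReal.toENNReal_pos_iff.2 hfy).ne').trans_le ((add_comm _ _).le.trans hyxb)
    refine hlt.not_ge (((EReal.toENNReal_le_toENNReal hsmall.le).trans_eq
      EReal.toENNReal_coe).trans ?_)
    exact mul_le_mul_right (Metric.infEDist_le_edist_of_mem hyU) _
  have hfy_top : f y ≠ ⊤ := EReal.toENNReal_ne_top_iff.1 (ne_top_of_le_ne_top hfxb hyxb.apply_le)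
  refine (hslope y hyU hfy).not_ge (strongSlope_le_of_eventually_le_add hfy_top
    ((hlsc y 0 hfy).mono fun _ => le_of_lt) ?_)
  filter_upwards [self_mem_nhdsWithin] with u hu
  exact (not_le.1 (mt (hymin u) hu)).le

/-- Basic lemma on error bounds: if `X` is complete, `U` open, `f` lsc and
`|∇f|(x) > r > 0` for all `x ∈ U` with `f x > 0`, then for every `xb ∈ U` with
`f xb < r · d(xb, X∖U)` there is `ub` with `f ub ≤ 0` and
`d(ub, xb) ≤ r⁻¹ (f xb)⁺`. -/
theorem basic_error_bound_lemma {X : Type*} [MetricSpace X] [CompleteSpace X]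
    (U : Set X) (hU : IsOpen U) (f : X → EReal)
    (hlsc : LowerSemicontinuous f) (hbot : ∀ x, f x ≠ ⊥)
    (r : ℝ) (hr : 0 < r)
    (hslope : ∀ x ∈ U, 0 < f x → ENNReal.ofReal r < strongSlope f x)
    (xb : X) (hxb : xb ∈ U)
    (hsmall : f xb < ((ENNReal.ofReal r * infEdist xb Uᶜ : ℝ≥0∞) : EReal)) :
    ∃ ub : X, f ub ≤ 0 ∧ ENNReal.ofReal r * edist xb ub ≤ erealPos (f xb) :=
  basic_error_bound_lemma_general U f hlsc r hr hslope xb hsmall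
end

section
/- Let X be a Banach space and f a proper closed convex function on X with S = {x : f(x) ≤ 0} ≠ ∅. Let K_f be the infimum of constants K such that d(x, S) ≤ K·(f(x))⁺ for all x ∈ X. Then K_f⁻¹ = inf{ d(0, ∂f(x)) : x ∉ S }, where ∂f is the convex subdifferential. -/
open EMetric ENNReal

/-- The error bound constant `K_f`: the infimum of `K` such that
`d(x, [f ≤ 0]) ≤ K (f x)⁺` for all `x`. -/
noncomputable def errK {X : Type*} [MetricSpace X] (f : X → EReal) : ℝ≥0∞ :=
  sInf {K : ℝ≥0∞ | ∀ x : X, infEdist x {u : X | f u ≤ 0} ≤ K * erealPos (f x)}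

/-- The subdifferential of convex analysis:
`∂f(x) = {x* : f y ≥ f x + ⟨x*, y − x⟩ for all y}`. -/
def convexSubdiff {X : Type*} [NormedAddCommGroup X] [NormedSpace ℝ X]
    (f : X → EReal) (x : X) : Set (X →L[ℝ] ℝ) :=
  {g | ∀ y : X, (g (y - x) : EReal) + f x ≤ f y}

/-!
If `g ∈ ∂f(x)` and `f x > 0`, the subgradient inequality gives `f x ≤ ‖g‖ d(x, S)`, so every
admissible constant `K` satisfies `K ≥ ‖g‖⁻¹`. Conversely, let `δ` be smaller than every such
`‖g‖` and fix `x`. Ekeland's principle applied to `f⁺` yields `z` with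
`d(z, x) ≤ f⁺(x) / δ` minimising `f⁺ + δ ‖· - z‖`. Separating the epigraph of `f⁺` from the
open region below the cone `f⁺(z) - δ ‖· - z‖` produces `g ∈ ∂f⁺(z)` with `‖g‖ ≤ δ`, and if
`f z > 0` convexity makes `g` a subgradient of `f` at `z`, which is impossible. Hence `z ∈ S`,
and `δ⁻¹` is admissible.
-/

open Filter Topology
open scoped NNReal

section Ekeland

variable {X : Type*} [PseudoEMetricSpace X] {F : X → ℝ≥0∞} {δ : ℝ≥0}

lemma add_edist_le_trans {x y w : X} (hwy : F w + δ * edist w y ≤ F y)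
    (hyx : F y + δ * edist y x ≤ F x) : F w + δ * edist w x ≤ F x :=
  calc F w + δ * edist w x ≤ F w + δ * edist w y + δ * edist y x := by
        rw [add_assoc, ← mul_add]; gcongr; exact edist_triangle w y x
    _ ≤ F x := by grw [hwy]; exact hyx

lemma exists_add_edist_le_forall_le_add (x : X) {ε : ℝ≥0∞} (hε : ε ≠ 0) :
    ∃ y, F y + δ * edist y x ≤ F x ∧
      ∀ w, F w + δ * edist w x ≤ F x → F y ≤ F w + ε := by
  set I := ⨅ w ∈ {w | F w + δ * edist w x ≤ F x}, F w
  have hx : F x + δ * edist x x ≤ F x := by simp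
  obtain ⟨y, hy, hyI⟩ : ∃ y, F y + δ * edist y x ≤ F x ∧ F y ≤ I + ε := by
    rcases eq_or_ne I ⊤ with hI | hI
    · exact ⟨x, hx, by simp [hI]⟩
    · obtain ⟨y, hy⟩ := iInf_lt_iff.1 (ENNReal.lt_add_right hI hε)
      obtain ⟨hyx, hlt⟩ := iInf_lt_iff.1 hy
      exact ⟨y, hyx, hlt.le⟩
  exact ⟨y, hy, fun w hw => hyI.trans (by gcongr; exact biInf_le F hw)⟩

/-- Ekeland's variational principle. -/
theorem LowerSemicontinuous.exists_add_edist_le_forall_le_add_edist [CompleteSpace X]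
    (hF : LowerSemicontinuous F) (hδ : δ ≠ 0) (x₀ : X) (h₀ : F x₀ ≠ ⊤) :
    ∃ z, F z + δ * edist z x₀ ≤ F x₀ ∧ ∀ w, F z ≤ F w + δ * edist w z := by
  have hε : ∀ n : ℕ, (2⁻¹ : ℝ≥0∞) ^ n ≠ 0 := fun n => pow_ne_zero n (by simp)
  choose next hnext hmin using fun n x =>
    exists_add_edist_le_forall_le_add (F := F) (δ := δ) x (hε n)
  -- `u (n + 1)` minimises `F`, up to `2⁻ⁿ`, among the points improving on `u n`.
  let u : ℕ → X := fun n => Nat.rec x₀ next n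
  have hchain : ∀ n m, n ≤ m → F (u m) + δ * edist (u m) (u n) ≤ F (u n) := by
    intro n m hnm
    induction m, hnm using Nat.le_induction with
    | base => simp
    | succ m _ ih => exact add_edist_le_trans (hnext m (u m)) ih
  have hfin : ∀ n, F (u n) ≠ ⊤ := fun n =>
    ne_top_of_le_ne_top h₀ (le_self_add.trans (hchain 0 n n.zero_le))
  have hgeo : ∀ n, edist (u (n + 1)) (u (n + 1 + 1)) ≤ (δ : ℝ≥0∞)⁻¹ / 2 ^ n := by
    intro n
    have h : F (u (n + 2)) + δ * edist (u (n + 2)) (u (n + 1)) ≤ F (u (n + 2)) + 2⁻¹ ^ n :=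
      (hchain (n + 1) (n + 2) (by omega)).trans (hmin n (u n) _ (hchain n (n + 2) (by omega)))
    calc edist (u (n + 1)) (u (n + 1 + 1))
        = (δ : ℝ≥0∞)⁻¹ * (δ * edist (u (n + 2)) (u (n + 1))) := by
          rw [← mul_assoc, ENNReal.inv_mul_cancel (by simpa using hδ) (by simp), one_mul,
            edist_comm]
      _ ≤ (δ : ℝ≥0∞)⁻¹ * 2⁻¹ ^ n := by
          gcongr
          exact ENNReal.le_of_add_le_add_left (hfin (n + 2)) h
      _ = (δ : ℝ≥0∞)⁻¹ / 2 ^ n := by rw [← ENNReal.inv_pow, div_eq_mul_inv]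
  obtain ⟨z, hz⟩ := cauchySeq_tendsto_of_complete
    (cauchySeq_of_edist_le_geometric_two _ (by simpa using hδ) hgeo)
  have hzu : ∀ n, F z + δ * edist z (u n) ≤ F (u n) := by
    intro n
    have hclosed : IsClosed {y | F y + δ * edist y (u n) ≤ F (u n)} :=
      (hF.add ((ENNReal.continuous_const_mul (by simp)).comp
        (continuous_id.edist continuous_const)).lowerSemicontinuous).isClosed_preimage _
    exact hclosed.mem_of_tendsto hz
      ((eventually_ge_atTop n).mono fun m hm => hchain n (m + 1) (by omega))
  refine ⟨z, hzu 0, fun w => ?_⟩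
  by_contra! hlt
  have hw : ∀ n, F z ≤ F w + 2⁻¹ ^ n := fun n =>
    (le_self_add.trans (hzu (n + 1))).trans
      (hmin n (u n) w (add_edist_le_trans hlt.le (hzu n)))
  have hlim : Tendsto (fun n => F w + (2⁻¹ : ℝ≥0∞) ^ n) atTop (𝓝 (F w)) := by
    simpa using tendsto_const_nhds.add
      (ENNReal.tendsto_pow_atTop_nhds_zero_of_lt_one (by norm_num : (2⁻¹ : ℝ≥0∞) < 1))
  exact (hlt.trans_le (ge_of_tendsto' hlim hw)).not_ge le_self_add

end Ekeland

theorem geometric_hahn_banach_open_prod {E : Type*} [TopologicalSpace E] [AddCommGroup E]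
    [Module ℝ E] [IsTopologicalAddGroup E] [ContinuousSMul ℝ E] {s t : Set (E × ℝ)}
    (hs₁ : Convex ℝ s) (hs₂ : IsOpen s) (ht : Convex ℝ t) (disj : Disjoint s t) :
    ∃ (φ : StrongDual ℝ E) (a u : ℝ),
      (∀ p ∈ s, φ p.1 + a * p.2 < u) ∧ ∀ p ∈ t, u ≤ φ p.1 + a * p.2 := by
  obtain ⟨ℓ, u, hs, ht⟩ := geometric_hahn_banach_open hs₁ hs₂ ht disj
  have hℓ : ∀ p : E × ℝ, ℓ p = ℓ.comp (.inl ℝ E ℝ) p.1 + ℓ (0, 1) * p.2 := fun p => by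
    rw [← ℓ.comp_inl_add_comp_inr p, mul_comm, ← smul_eq_mul, ← map_smul]
    simp
  exact ⟨ℓ.comp (.inl ℝ E ℝ), ℓ (0, 1), u, fun p hp => hℓ p ▸ hs p hp,
    fun p hp => hℓ p ▸ ht p hp⟩

lemma StrongDual.norm_le_of_forall_apply_le {E : Type*} [SeminormedAddCommGroup E]
    [NormedSpace ℝ E] {g : StrongDual ℝ E} {σ : ℝ} (hσ : 0 ≤ σ) (h : ∀ w, g w ≤ σ * ‖w‖) :
    ‖g‖ ≤ σ :=
  g.opNorm_le_bound hσ fun w => by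
    have h' := h (-w)
    rw [map_neg, norm_neg] at h'
    rw [Real.norm_eq_abs, abs_le]
    exact ⟨by linarith, h w⟩

def epigraph {X : Type*} (f : X → EReal) : Set (X × ℝ) := {p | f p.1 ≤ p.2}

@[simp]
lemma mem_epigraph {X : Type*} {f : X → EReal} {p : X × ℝ} : p ∈ epigraph f ↔ f p.1 ≤ p.2 :=
  Iff.rfl

section ConvexAnalysis

variable {X : Type*} [NormedAddCommGroup X] [NormedSpace ℝ X]

lemma convex_epigraph {f : X → EReal}
    (hconv : ∀ x y : X, ∀ t : ℝ, 0 ≤ t → t ≤ 1 →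
      f (t • x + (1 - t) • y) ≤ (t : EReal) * f x + ((1 - t : ℝ) : EReal) * f y) :
    Convex ℝ (epigraph f) := by
  rintro ⟨x, s⟩ hx ⟨y, r⟩ hy a b ha hb hab
  obtain rfl : b = 1 - a := by linarith
  calc f (a • x + (1 - a) • y) ≤ (a : EReal) * f x + ((1 - a : ℝ) : EReal) * f y :=
        hconv x y a ha (by linarith)
    _ ≤ (a : EReal) * s + ((1 - a : ℝ) : EReal) * r := by
        gcongr
        exacts [hx, hy]
    _ = ((a • (x, s) + (1 - a) • (y, r)).2 : EReal) := by simp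

lemma convex_epigraph_max_zero {f : X → EReal} (hf : Convex ℝ (epigraph f)) :
    Convex ℝ (epigraph fun x => max 0 (f x)) := by
  convert hf.inter (convex_univ.prod (convex_Ici 0)) using 1
  ext p
  simp [and_comm]

lemma exists_mem_convexSubdiff_norm_le_of_forall_le_add_norm {F : X → EReal}
    (hF : Convex ℝ (epigraph F)) {z : X} {c σ : ℝ} (hz : F z = c) (hσ : 0 ≤ σ)
    (hmin : ∀ w, F z ≤ F w + ((σ * ‖w - z‖ : ℝ) : EReal)) :
    ∃ g ∈ convexSubdiff F z, ‖g‖ ≤ σ := by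
  set C : Set (X × ℝ) := {p | p.2 < c - σ * dist p.1 z}
  have hCo : IsOpen C := isOpen_lt continuous_snd (by fun_prop)
  have hCc : Convex ℝ C := by
    have hconc : ConcaveOn ℝ Set.univ fun w : X => c - σ * dist w z :=
      (((convexOn_dist z convex_univ).smul hσ).neg.add_const c).congr fun w _ => by
        simp [neg_add_eq_sub]
    simpa [C] using hconc.convex_strict_hypograph
  have hdisj : Disjoint C (epigraph F) := by
    refine Set.disjoint_left.2 fun p hpC hpE => ?_
    have h : (c : EReal) ≤ p.2 + ((σ * ‖p.1 - z‖ : ℝ) : EReal) :=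
      hz ▸ (hmin p.1).trans (by gcongr; exact hpE)
    norm_cast at h
    have hpC' : p.2 < c - σ * ‖p.1 - z‖ := by simpa [C, dist_eq_norm] using hpC
    linarith
  obtain ⟨φ, a, u, hsepC, hsepE⟩ := geometric_hahn_banach_open_prod hCc hCo hF hdisj
  have hzC : ∀ s < c, φ z + a * s < u := fun s hs => hsepC (z, s) (by simpa [C] using hs)
  have hzE : u ≤ φ z + a * c := hsepE (z, c) (by simp [hz])
  have ha : 0 < a := by
    by_contra! h
    have := hzC (c - 1) (by linarith)
    nlinarith
  have hu : φ z + a * c ≤ u := by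
    refine le_of_forall_pos_lt_add fun ε hε => ?_
    have := hzC (c - ε / a) (by linarith [div_pos hε ha])
    rw [mul_sub, mul_div_cancel₀ ε ha.ne'] at this
    linarith
  have hφ : ∀ w, -φ w ≤ a * (σ * ‖w‖) := by
    intro w
    refine le_of_forall_pos_lt_add fun ε hε => ?_
    have := hsepC (z - w, c - σ * ‖w‖ - ε / a) (by simp [C, dist_eq_norm, div_pos hε ha])
    rw [map_sub, mul_sub, mul_sub, mul_div_cancel₀ ε ha.ne'] at this
    linarith
  refine ⟨-(a⁻¹ • φ), fun y => ?_, ?_⟩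
  · refine EReal.le_of_forall_lt_iff_le.1 fun t ht => ?_
    have hy := hsepE (y, t) (by simpa using ht.le)
    rw [hz, ← EReal.coe_add, EReal.coe_le_coe_iff]
    have hg : (-(a⁻¹ • φ)) (y - z) = (φ z - φ y) / a := by
      simp [div_eq_inv_mul, mul_sub]
    rw [hg, div_add' _ _ _ ha.ne', div_le_iff₀ ha]
    linarith
  · refine StrongDual.norm_le_of_forall_apply_le hσ fun w => ?_
    rw [neg_apply, smul_apply, smul_eq_mul, ← mul_neg, inv_mul_le_iff₀ ha]
    exact hφ w

lemma mem_convexSubdiff_of_mem_convexSubdiff_max_zero {f : X → EReal} (hbot : ∀ x, f x ≠ ⊥)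
    (hf : Convex ℝ (epigraph f)) {z : X} (hz : 0 < f z) {g : StrongDual ℝ X}
    (hg : g ∈ convexSubdiff (fun x => max 0 (f x)) z) : g ∈ convexSubdiff f z := by
  intro y
  have hgy := hg y
  simp only [max_eq_right hz.le] at hgy
  rcases le_total 0 (f y) with hy | hy
  · rwa [max_eq_right hy] at hgy
  rw [max_eq_left hy] at hgy
  obtain ⟨c, hc⟩ : ∃ c : ℝ, f z = c :=
    ⟨_, (EReal.coe_toReal (fun h => by
      rw [h, EReal.add_top_of_ne_bot (EReal.coe_ne_bot _), top_le_iff] at hgy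
      exact EReal.zero_ne_top hgy) (hbot z)).symm⟩
  obtain ⟨b, hb⟩ : ∃ b : ℝ, f y = b :=
    ⟨_, (EReal.coe_toReal (hy.trans_lt EReal.zero_lt_top).ne (hbot y)).symm⟩
  rw [hc] at hgy hz ⊢
  rw [hb] at hy ⊢
  norm_cast at hgy hz hy ⊢
  -- `t` makes `t * f y + (1 - t) * f z` vanish, so `max 0 ∘ f` agrees with `f` on that point.
  set t := c / (c - b)
  have hcb : 0 < c - b := by linarith
  have htcb : t * (c - b) = c := div_mul_cancel₀ c hcb.ne'
  have ht0 : 0 < t := div_pos hz hcb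
  have ht1 : t ≤ 1 := (div_le_one hcb).2 (by linarith)
  have hp0 : f (t • y + (1 - t) • z) ≤ 0 := by
    have hp : t • (y, b) + (1 - t) • (z, c) ∈ epigraph f :=
      hf (by simp [hb]) (by simp [hc]) ht0.le (by linarith) (by ring)
    have hsum : t * b + (1 - t) * c = 0 := by linear_combination -htcb
    simpa [hsum] using hp
  have hgp := hg (t • y + (1 - t) • z)
  dsimp only at hgp
  rw [max_eq_left hp0, hc, max_eq_right (by exact_mod_cast hz.le),
    show t • y + (1 - t) • z - z = t • (y - z) by module, map_smul, smul_eq_mul] at hgp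
  norm_cast at hgp
  nlinarith

end ConvexAnalysis

lemma erealPos_eq_toENNReal_s14 : erealPos = EReal.toENNReal := rfl

lemma coe_erealPos (a : EReal) : (erealPos a : EReal) = max 0 a := EReal.coe_toENNReal_eq_max

lemma LowerSemicontinuous.erealPos {X : Type*} [TopologicalSpace X] {f : X → EReal}
    (hf : LowerSemicontinuous f) : LowerSemicontinuous fun x => erealPos (f x) :=
  EReal.continuous_toENNReal.comp_lowerSemicontinuous hf fun _ _ => EReal.toENNReal_le_toENNReal

section ErrorBound

variable {X : Type*} [NormedAddCommGroup X] [NormedSpace ℝ X] {f : X → EReal}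

lemma le_add_of_mem_convexSubdiff {x : X} {g : StrongDual ℝ X} (hg : g ∈ convexSubdiff f x)
    (y : X) : f x ≤ f y + ((‖g‖ * ‖x - y‖ : ℝ) : EReal) :=
  calc f x = ((g (y - x) : ℝ) : EReal) + f x + ((-g (y - x) : ℝ) : EReal) := by
        rw [add_comm, ← add_assoc, ← EReal.coe_add, neg_add_cancel, EReal.coe_zero, zero_add]
    _ ≤ f y + ((-g (y - x) : ℝ) : EReal) := by gcongr; exact hg y
    _ ≤ f y + ((‖g‖ * ‖x - y‖ : ℝ) : EReal) := by
        gcongr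
        rw [← map_neg, neg_sub]
        exact (le_abs_self _).trans (g.le_opNorm _)

lemma inv_nnnorm_le_errK (hproper : ∃ x, f x ≠ ⊤) {x : X} (hx : ¬ f x ≤ 0)
    {g : StrongDual ℝ X} (hg : g ∈ convexSubdiff f x) : (‖g‖₊ : ℝ≥0∞)⁻¹ ≤ errK f := by
  obtain ⟨x₀, hx₀⟩ := hproper
  have hxt : f x ≠ ⊤ := ne_top_of_le_ne_top (EReal.add_ne_top hx₀ (EReal.coe_ne_top _))
    (le_add_of_mem_convexSubdiff hg x₀)
  have hP0 : erealPos (f x) ≠ 0 := EReal.toENNReal_ne_zero_iff.2 (not_le.1 hx)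
  have hPt : erealPos (f x) ≠ ⊤ := EReal.toENNReal_ne_top_iff.2 hxt
  have hdist : erealPos (f x) / ‖g‖₊ ≤ Metric.infEDist x {u | f u ≤ 0} := by
    refine Metric.le_infEDist.2 fun y hy => ENNReal.div_le_of_le_mul' ?_
    calc erealPos (f x) ≤ erealPos ((‖g‖ * ‖x - y‖ : ℝ) : EReal) :=
          EReal.toENNReal_le_toENNReal <| (le_add_of_mem_convexSubdiff hg y).trans <| by
            grw [show f y ≤ 0 from hy, zero_add]
      _ = ‖g‖₊ * edist x y := by
          rw [erealPos_eq_toENNReal_s14, EReal.real_coe_toENNReal, ENNReal.ofReal_mul (norm_nonneg _),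
            ofReal_norm, edist_dist, dist_eq_norm, ofReal_norm, enorm_eq_nnnorm]
  refine le_sInf fun K hK => ?_
  have := hdist.trans (hK x)
  rw [ENNReal.div_eq_inv_mul] at this
  exact (ENNReal.mul_le_mul_iff_left hP0 hPt).1 this

variable [CompleteSpace X]

theorem exists_edist_le_and_convexSubdiff_norm_le (hbot : ∀ x, f x ≠ ⊥)
    (hlsc : LowerSemicontinuous f) (hf : Convex ℝ (epigraph f)) {δ : ℝ≥0} (hδ : 0 < δ) {x : X}
    (hx : f x ≠ ⊤) :
    ∃ z, edist z x ≤ (δ : ℝ≥0∞)⁻¹ * erealPos (f x) ∧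
      (0 < f z → ∃ g ∈ convexSubdiff f z, ‖g‖₊ ≤ δ) := by
  obtain ⟨z, hzx, hmin⟩ := hlsc.erealPos.exists_add_edist_le_forall_le_add_edist hδ.ne' x
    (EReal.toENNReal_ne_top_iff.2 hx)
  refine ⟨z, ?_, fun hz => ?_⟩
  · rw [← ENNReal.div_eq_inv_mul,
      ENNReal.le_div_iff_mul_le (.inl (by simpa using hδ.ne')) (.inl (by simp)), mul_comm]
    exact le_add_self.trans hzx
  have hzt : f z ≠ ⊤ := fun h => EReal.toENNReal_ne_top_iff.2 hx <|
    top_le_iff.1 (by rw [← EReal.toENNReal_top, ← h]; exact le_self_add.trans hzx)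
  have hc : max 0 (f z) = (((max 0 (f z)).toReal : ℝ) : EReal) :=
    (EReal.coe_toReal (by simp [hzt]) (by simp)).symm
  have hmin' : ∀ w, max 0 (f z) ≤ max 0 (f w) + ((δ * ‖w - z‖ : ℝ) : EReal) := by
    intro w
    have hδw : ((δ * ‖w - z‖ : ℝ) : EReal) = ((δ * edist w z : ℝ≥0∞) : EReal) := by
      rw [edist_dist, dist_eq_norm, ← ENNReal.ofReal_coe_nnreal,
        ← ENNReal.ofReal_mul δ.coe_nonneg, EReal.coe_ennreal_ofReal, max_eq_left (by positivity)]
    rw [← coe_erealPos, ← coe_erealPos, hδw, ← EReal.coe_ennreal_add,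
      EReal.coe_ennreal_le_coe_ennreal_iff]
    exact hmin w
  obtain ⟨g, hg, hgδ⟩ := exists_mem_convexSubdiff_norm_le_of_forall_le_add_norm
    (convex_epigraph_max_zero hf) hc δ.2 hmin'
  exact ⟨g, mem_convexSubdiff_of_mem_convexSubdiff_max_zero hbot hf hz hg, hgδ⟩

lemma errK_le_inv_of_lt_nnnorm (hbot : ∀ x, f x ≠ ⊥) (hlsc : LowerSemicontinuous f)
    (hf : Convex ℝ (epigraph f)) {δ : ℝ≥0} (hδ : 0 < δ)
    (hδg : ∀ x, ¬ f x ≤ 0 → ∀ g ∈ convexSubdiff f x, (δ : ℝ≥0∞) < ‖g‖₊) :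
    errK f ≤ (δ : ℝ≥0∞)⁻¹ := by
  refine sInf_le fun x => ?_
  rcases eq_or_ne (f x) ⊤ with hx | hx
  · simp [erealPos, hx, ENNReal.mul_top]
  obtain ⟨z, hzx, hz⟩ := exists_edist_le_and_convexSubdiff_norm_le hbot hlsc hf hδ hx
  by_cases hzS : f z ≤ 0
  · exact (Metric.infEDist_le_edist_of_mem (show z ∈ {u | f u ≤ 0} from hzS)).trans
      (by rwa [edist_comm])
  · obtain ⟨g, hg, hgδ⟩ := hz (not_le.1 hzS)
    exact absurd (hδg z hzS g hg) (not_lt.2 (by exact_mod_cast hgδ))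

end ErrorBound

theorem convex_error_bound_general {X : Type*} [NormedAddCommGroup X] [NormedSpace ℝ X]
    [CompleteSpace X] (f : X → EReal)
    (hbot : ∀ x, f x ≠ ⊥) (hproper : ∃ x, f x ≠ ⊤)
    (hlsc : LowerSemicontinuous f)
    (hconv : ∀ x y : X, ∀ t : ℝ, 0 ≤ t → t ≤ 1 →
      f (t • x + (1 - t) • y) ≤ (t : EReal) * f x + ((1 - t : ℝ) : EReal) * f y) :
    (errK f)⁻¹ = ⨅ x ∈ {x : X | ¬ f x ≤ 0}, ⨅ g ∈ convexSubdiff f x, (‖g‖₊ : ℝ≥0∞) := by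
  refine le_antisymm (le_iInf₂ fun x hx => le_iInf₂ fun g hg => ?_) ?_
  · exact ENNReal.inv_le_iff_inv_le.2 (inv_nnnorm_le_errK hproper hx hg)
  · refine ENNReal.le_of_forall_pos_nnreal_lt fun δ hδ hδr => ?_
    have hK : errK f ≤ (δ : ℝ≥0∞)⁻¹ :=
      errK_le_inv_of_lt_nnnorm hbot hlsc (convex_epigraph hconv) hδ
        fun x hx g hg => hδr.trans_le ((iInf₂_le x hx).trans (iInf₂_le g hg))
    exact ENNReal.le_inv_iff_le_inv.1 hK

/-- Error bound for convex functions: for a proper closed convex function `f` on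
a Banach space with `S = [f ≤ 0] ≠ ∅`,
`K_f⁻¹ = inf {d(0, ∂f x) : x ∉ S}`. -/
theorem convex_error_bound {X : Type*} [NormedAddCommGroup X] [NormedSpace ℝ X]
    [CompleteSpace X] (f : X → EReal)
    (hbot : ∀ x, f x ≠ ⊥) (hproper : ∃ x, f x ≠ ⊤)
    (hlsc : LowerSemicontinuous f)
    (hconv : ∀ x y : X, ∀ t : ℝ, 0 ≤ t → t ≤ 1 →
      f (t • x + (1 - t) • y) ≤ (t : EReal) * f x + ((1 - t : ℝ) : EReal) * f y)
    (hS : {x : X | f x ≤ 0}.Nonempty) :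
    (errK f)⁻¹ = ⨅ x ∈ {x : X | ¬ f x ≤ 0}, ⨅ g ∈ convexSubdiff f x, (‖g‖₊ : ℝ≥0∞) :=
  convex_error_bound_general f hbot hproper hlsc hconv
end

section
/- Let X, Y be Banach spaces and F : X ⇒ Y a set-valued mapping with convex and locally closed graph. Suppose there are (x̄, ȳ) ∈ graph F and α > 0, β > 0 such that F(B(x̄, α)) is dense in B(ȳ, β). Then sur F(x̄|ȳ) ≥ β/α, i.e., F is open at a linear rate at least β/α near (x̄, ȳ). -/
open EMetric ENNReal

/-- The modulus of surjection `sur F(xb|yb)` of a set-valued mapping near a graph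
point: the supremum of `r` such that for some `ε > 0`,
`B(y, r t) ∩ B(yb, ε) ⊆ F (B(x,t))` for all `(x,y) ∈ graph F` with
`d(x, xb) < ε` and `0 ≤ t < ε`. -/
noncomputable def surSV {X Y : Type*} [MetricSpace X] [MetricSpace Y]
    (F : X → Set Y) (xb : X) (yb : Y) : ℝ≥0∞ :=
  sSup {r : ℝ≥0∞ | ∃ ε : ℝ, 0 < ε ∧ ∀ x : X, ∀ y ∈ F x, dist x xb < ε →
    ∀ t : ℝ, 0 ≤ t → t < ε → ∀ z : Y, edist z y ≤ r * ENNReal.ofReal t →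
      dist z yb < ε → ∃ x' : X, dist x' x ≤ t ∧ z ∈ F x'}

set_option maxHeartbeats 2000000 in
/-- Quantitative Robinson–Ursescu theorem: if `F : X ⇒ Y` has convex and locally
closed graph, `yb ∈ F xb`, and `F (B(xb, α))` is dense in `B(yb, β)` with
`α, β > 0`, then `sur F(xb|yb) ≥ β / α`. -/
theorem convex_graph_surjection_bound {X Y : Type*}
    [NormedAddCommGroup X] [NormedSpace ℝ X] [CompleteSpace X]
    [NormedAddCommGroup Y] [NormedSpace ℝ Y] [CompleteSpace Y]
    (F : X → Set Y) (xb : X) (yb : Y) (hxy : yb ∈ F xb)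
    (hconv : Convex ℝ {p : X × Y | p.2 ∈ F p.1})
    (hloc : ∃ ρ : ℝ, 0 < ρ ∧
      IsClosed ({p : X × Y | p.2 ∈ F p.1} ∩ Metric.closedBall (xb, yb) ρ))
    (α β : ℝ) (hα : 0 < α) (hβ : 0 < β)
    (hdense : ∀ y ∈ Metric.closedBall yb β,
      y ∈ closure {v : Y | ∃ x ∈ Metric.closedBall xb α, v ∈ F x}) :
    ENNReal.ofReal (β / α) ≤ surSV F xb yb := by
  obtain ⟨ρ, hρ, hclosed⟩ := hloc
  have key : ∀ r : ℝ, 0 < r → r < β / α →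
      ENNReal.ofReal r ∈ {r : ℝ≥0∞ | ∃ ε : ℝ, 0 < ε ∧ ∀ x : X, ∀ y ∈ F x, dist x xb < ε →
        ∀ t : ℝ, 0 ≤ t → t < ε → ∀ z : Y, edist z y ≤ r * ENNReal.ofReal t →
          dist z yb < ε → ∃ x' : X, dist x' x ≤ t ∧ z ∈ F x'} := by
    intro r hr hrlt
    have hrα : r * α < β := (lt_div_iff₀ hα).mp hrlt
    have h3r : (0:ℝ) < 2*(3*r+1) := by linarith
    have hr2 : (0:ℝ) < r + 2 := by linarith
    set ε : ℝ := min ((β - r*α)/(2*(3*r+1))) (ρ/(r+2)) with hεdef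
    have hε0 : 0 < ε := lt_min (div_pos (by linarith) h3r) (div_pos hρ hr2)
    have hεa : ε * (2*(3*r+1)) ≤ β - r*α :=
      (le_div_iff₀ h3r).mp (min_le_left _ _)
    have hεb : ε * (r+2) ≤ ρ :=
      (le_div_iff₀ hr2).mp (min_le_right _ _)
    have hεr : 0 ≤ ε * r := mul_nonneg hε0.le hr.le
    have hrα0 : 0 < r * α := mul_pos hr hα
    have h2ερ : 2*ε ≤ ρ := by nlinarith
    have hr1ρ : (r+1)*ε ≤ ρ := by nlinarith
    set δ : ℝ := (r+1)*ε with hδdef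
    have hβδ : 0 < β - δ := by rw [hδdef]; nlinarith
    set q : ℝ := r*(α+2*ε)/(β-δ) with hqdef
    have hq0 : 0 < q := by
      apply div_pos _ hβδ; nlinarith
    have hq1 : q < 1 := by
      rw [hqdef, div_lt_one hβδ, hδdef]; nlinarith
    set θ : ℝ := 1 - q with hθdef
    have hθ0 : 0 < θ := by rw [hθdef]; linarith
    have hθ1 : θ < 1 := by rw [hθdef]; linarith
    refine ⟨ε, hε0, ?_⟩
    intro x y hyF hx t ht0 htε z hz hzyb
    have hdzy : dist z y ≤ r * t := by
      rw [edist_dist, ← ENNReal.ofReal_mul hr.le] at hz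
      exact (ENNReal.ofReal_le_ofReal_iff (by positivity)).mp hz
    rcases eq_or_lt_of_le ht0 with ht0' | ht0'
    · refine ⟨x, by simp [← ht0'], ?_⟩
      have h1 : dist z y ≤ 0 := by rw [← ht0'] at hdzy; linarith
      have h2 : z = y := dist_eq_zero.mp (le_antisymm h1 dist_nonneg)
      rwa [h2]
    -- one-step approximation lemma
    have step : ∀ (a : X) (b : Y), b ∈ F a → dist a xb ≤ 2*ε → dist b yb ≤ δ →
        ∀ τ : ℝ, 0 < τ → τ ≤ t → dist b z ≤ r*τ → ∀ η : ℝ, 0 < η →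
        ∃ (a' : X) (b' : Y), b' ∈ F a' ∧ dist a' a ≤ q*τ ∧ dist b' z ≤ η := by
      intro a b hb hab hbyb τ hτ0 hτt hbz η hη
      set s : ℝ := r*τ/(β-δ) with hsdef
      have hs0 : 0 < s := by
        apply div_pos _ hβδ; positivity
      have hs1 : s ≤ 1 := by
        rw [hsdef, div_le_one hβδ, hδdef]; nlinarith
      set v : Y := b + s⁻¹ • (z - b) with hvdef
      have hvb : dist v b = s⁻¹ * dist z b := by
        rw [hvdef, dist_eq_norm, add_sub_cancel_left, norm_smul, Real.norm_eq_abs,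
          abs_of_pos (inv_pos.mpr hs0), dist_eq_norm]
      have hsinv : s⁻¹ * (r*τ) = β - δ := by
        rw [hsdef, inv_div]
        field_simp
      have hvyb : v ∈ Metric.closedBall yb β := by
        rw [Metric.mem_closedBall]
        have h1 : dist v yb ≤ dist v b + dist b yb := dist_triangle _ _ _
        have h3 : s⁻¹ * dist z b ≤ s⁻¹ * (r*τ) := by
          apply mul_le_mul_of_nonneg_left _ (inv_nonneg.mpr hs0.le)
          rw [dist_comm]; exact hbz
        rw [hsinv] at h3
        rw [hvb] at h1
        linarith
      obtain ⟨w, hw, hwv⟩ := Metric.mem_closure_iff.mp (hdense v hvyb) (s⁻¹ * η)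
        (by positivity)
      obtain ⟨u, hu, hwu⟩ := hw
      refine ⟨(1-s) • a + s • u, (1-s) • b + s • w, ?_, ?_, ?_⟩
      · have hmem := hconv (show (a, b) ∈ {p : X × Y | p.2 ∈ F p.1} from hb)
          (show (u, w) ∈ {p : X × Y | p.2 ∈ F p.1} from hwu)
          (by linarith : (0:ℝ) ≤ 1 - s) hs0.le (by ring)
        exact hmem
      · have heq : (1-s) • a + s • u - a = s • (u - a) := by
          rw [smul_sub, sub_smul, one_smul]; abel
        rw [dist_eq_norm, heq, norm_smul, Real.norm_eq_abs, abs_of_pos hs0]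
        have hua : ‖u - a‖ ≤ α + 2*ε := by
          rw [← dist_eq_norm]
          calc dist u a ≤ dist u xb + dist xb a := dist_triangle _ _ _
            _ ≤ α + 2*ε := by
                rw [dist_comm xb a]
                exact add_le_add (Metric.mem_closedBall.mp hu) hab
        calc s * ‖u - a‖ ≤ s * (α + 2*ε) := by
              apply mul_le_mul_of_nonneg_left hua hs0.le
          _ = q * τ := by rw [hsdef, hqdef]; ring
      · have hzv : (1-s) • b + s • v = z := by
          rw [hvdef, smul_add, smul_inv_smul₀ hs0.ne', sub_smul, one_smul]; abel
        have heq : (1-s) • b + s • w - z = s • (w - v) := by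
          rw [← hzv, smul_sub]; abel
        rw [dist_eq_norm, heq, norm_smul, Real.norm_eq_abs, abs_of_pos hs0]
        have hwv' : ‖w - v‖ ≤ s⁻¹ * η := by
          rw [← dist_eq_norm, dist_comm]; exact hwv.le
        calc s * ‖w - v‖ ≤ s * (s⁻¹ * η) := mul_le_mul_of_nonneg_left hwv' hs0.le
          _ = η := by field_simp
    -- iteration
    have ex : ∀ (n : ℕ) (p : X × Y), p.2 ∈ F p.1 → dist p.1 x ≤ (1-θ^n)*t →
        dist p.2 z ≤ r*(θ^n*t) →
        ∃ p' : X × Y, (p'.2 ∈ F p'.1 ∧ dist p'.1 x ≤ (1-θ^(n+1))*t ∧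
          dist p'.2 z ≤ r*(θ^(n+1)*t)) ∧ dist p'.1 p.1 ≤ q*(θ^n*t) ∧
          dist p'.2 p.2 ≤ 2*r*(θ^n*t) := by
      intro n p hp h1 h2
      have hθn1 : θ^n ≤ 1 := pow_le_one₀ hθ0.le hθ1.le
      have hθnpos : 0 < θ^n := pow_pos hθ0 n
      have hθnt : θ^n * t ≤ t := by nlinarith
      have hpx : dist p.1 xb ≤ 2*ε := by
        calc dist p.1 xb ≤ dist p.1 x + dist x xb := dist_triangle _ _ _
          _ ≤ 2*ε := by nlinarith
      have hpy : dist p.2 yb ≤ δ := by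
        calc dist p.2 yb ≤ dist p.2 z + dist z yb := dist_triangle _ _ _
          _ ≤ δ := by rw [hδdef]; nlinarith
      obtain ⟨a', b', hb', hd1, hd2⟩ := step p.1 p.2 hp hpx hpy (θ^n*t)
        (by positivity) hθnt h2 (r*(θ^(n+1)*t)) (by positivity)
      refine ⟨(a', b'), ⟨hb', ?_, hd2⟩, hd1, ?_⟩
      · calc dist a' x ≤ dist a' p.1 + dist p.1 x := dist_triangle _ _ _
          _ ≤ q*(θ^n*t) + (1-θ^n)*t := add_le_add hd1 h1
          _ = (1-θ^(n+1))*t := by rw [pow_succ]; linear_combination (θ^n*t) * hθdef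
      · calc dist b' p.2 ≤ dist b' z + dist z p.2 := dist_triangle _ _ _
          _ ≤ r*(θ^(n+1)*t) + r*(θ^n*t) := by
              rw [dist_comm z p.2]; exact add_le_add hd2 h2
          _ ≤ 2*r*(θ^n*t) := by
              rw [pow_succ]
              nlinarith [mul_nonneg (mul_nonneg (mul_nonneg hr.le hθnpos.le) ht0'.le)
                (by linarith : (0:ℝ) ≤ 1 - θ)]
    choose! next hnext using ex
    set f : ℕ → X × Y := fun n => Nat.rec (x, y) (fun n p => next n p) n with hfdef
    have hf0 : f 0 = (x, y) := rfl
    have hfs : ∀ n, f (n+1) = next n (f n) := fun n => rfl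
    have hInv : ∀ n, (f n).2 ∈ F (f n).1 ∧ dist (f n).1 x ≤ (1-θ^n)*t ∧
        dist (f n).2 z ≤ r*(θ^n*t) := by
      intro n
      induction n with
      | zero =>
        rw [hf0]
        refine ⟨hyF, by simp, ?_⟩
        show dist y z ≤ r*(θ^0*t)
        rw [dist_comm, pow_zero, one_mul]; exact hdzy
      | succ n ih =>
        rw [hfs]
        exact (hnext n (f n) ih.1 ih.2.1 ih.2.2).1
    have hstepdist := fun n => (hnext n (f n) (hInv n).1 (hInv n).2.1 (hInv n).2.2).2
    have hcauchy : CauchySeq f := by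
      apply cauchySeq_of_le_geometric θ ((q + 2*r)*t) hθ1
      intro n
      have h := hstepdist n
      rw [← hfs] at h
      rw [Prod.dist_eq]
      have hθnpos : (0:ℝ) < θ^n := pow_pos hθ0 n
      apply max_le
      · rw [dist_comm]
        calc dist (f (n+1)).1 (f n).1 ≤ q*(θ^n*t) := h.1
          _ ≤ (q+2*r)*t*θ^n := by
              nlinarith [mul_nonneg (mul_nonneg hr.le ht0'.le) hθnpos.le]
      · rw [dist_comm]
        calc dist (f (n+1)).2 (f n).2 ≤ 2*r*(θ^n*t) := h.2
          _ ≤ (q+2*r)*t*θ^n := by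
              nlinarith [mul_nonneg (mul_nonneg hq0.le ht0'.le) hθnpos.le]
    obtain ⟨p', hp'⟩ := cauchySeq_tendsto_of_complete hcauchy
    have hmem : ∀ n, f n ∈ ({p : X × Y | p.2 ∈ F p.1} ∩ Metric.closedBall (xb, yb) ρ) := by
      intro n
      have hθn1 : θ^n ≤ 1 := pow_le_one₀ hθ0.le hθ1.le
      have hθnpos : (0:ℝ) < θ^n := pow_pos hθ0 n
      refine ⟨(hInv n).1, ?_⟩
      rw [Metric.mem_closedBall, Prod.dist_eq]
      apply max_le
      · calc dist (f n).1 xb ≤ dist (f n).1 x + dist x xb := dist_triangle _ _ _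
          _ ≤ ρ := by nlinarith [(hInv n).2.1]
      · calc dist (f n).2 yb ≤ dist (f n).2 z + dist z yb := dist_triangle _ _ _
          _ ≤ ρ := by
              nlinarith [(hInv n).2.2, hr1ρ, hδdef,
                mul_nonneg (mul_nonneg hr.le ht0'.le) (by linarith : (0:ℝ) ≤ 1 - θ^n),
                mul_nonneg hr.le (by linarith : (0:ℝ) ≤ ε - t)]
    have hp'mem := hclosed.mem_of_tendsto hp' (Filter.Eventually.of_forall hmem)
    have hsnd : Filter.Tendsto (fun n => (f n).2) Filter.atTop (nhds z) := by
      rw [tendsto_iff_dist_tendsto_zero]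
      apply squeeze_zero (fun n => dist_nonneg) (fun n => (hInv n).2.2)
      have : Filter.Tendsto (fun n : ℕ => θ^n) Filter.atTop (nhds 0) :=
        tendsto_pow_atTop_nhds_zero_of_lt_one hθ0.le hθ1
      have h2 := (this.mul_const t).const_mul r
      simpa using h2
    have hp2 : p'.2 = z := tendsto_nhds_unique ((continuous_snd.tendsto p').comp hp') hsnd
    have hp1 : dist p'.1 x ≤ t := by
      apply le_of_tendsto (((continuous_fst.tendsto p').comp hp').dist (tendsto_const_nhds : Filter.Tendsto _ _ (nhds x)))
      filter_upwards with n
      show dist (f n).1 x ≤ t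
      have hθnpos : (0:ℝ) < θ^n := pow_pos hθ0 n
      nlinarith [(hInv n).2.1]
    exact ⟨p'.1, hp1, by rw [← hp2]; exact hp'mem.1⟩
  unfold surSV
  refine le_of_forall_lt fun c hc => ?_
  have hba : 0 < β / α := div_pos hβ hα
  have hctop : c ≠ ⊤ := (hc.trans_le le_top).ne
  have hblt : c.toReal < β / α := (ENNReal.lt_ofReal_iff_toReal_lt hctop).mp hc
  have hct0 : 0 ≤ c.toReal := ENNReal.toReal_nonneg
  have hr0 : 0 < (c.toReal + β/α)/2 := by linarith
  have hrlt : (c.toReal + β/α)/2 < β/α := by linarith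
  have hcr : c < ENNReal.ofReal ((c.toReal + β/α)/2) :=
    (ENNReal.lt_ofReal_iff_toReal_lt hctop).mpr (by linarith)
  exact hcr.trans_le (le_sSup (key _ hr0 hrlt))
end

section
/- Let X and Y be Banach spaces and F : X ⇒ Y have closed convex graph. If ȳ is in the interior of F(X), then F is metrically regular at every point (x̄, ȳ) of its graph: there exist K > 0 and ε > 0 such that d(x, F⁻¹(y)) ≤ K d(y, F(x)) whenever ‖x − x̄‖ < ε and ‖y − ȳ‖ < ε. -/
/-!
Let `S` be the image under `F` of the closed unit ball around `xb`. Convexity of the graph and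
`yb ∈ int F(X)` make `S` absorbing at `yb`, so by Baire category the closed convex set `cl S`
contains a ball `B(yb, r)`. Since the graph is closed and `X` is complete, density upgrades to
openness: every `y ∈ B(yb, r/2)` is reached by a sequence in the graph whose `Y`-errors halve at
each step and whose `X`-components form a Cauchy sequence in the unit ball. Finally, for
`(x₀, y₀)` in the graph and `y` near `yb`, push `y` away from `y₀` to a point `w ∈ B(yb, r/2)`:
then `y` is a convex combination of `y₀` and `w` with weight `O(‖y - y₀‖)` on `w`, and convexity
gives a point of `F⁻¹ y` within `O(‖y - y₀‖)` of `x₀`.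
-/

open EMetric ENNReal NNReal

open Set Filter Topology

theorem Convex.mem_interior_of_isClosed_of_forall_exists_add_smul_mem {E : Type*}
    [AddCommGroup E] [Module ℝ E] [TopologicalSpace E] [IsTopologicalAddGroup E]
    [ContinuousConstSMul ℝ E] [BaireSpace E] {C : Set E} (hconv : Convex ℝ C)
    (hclosed : IsClosed C) {c : E} (habs : ∀ v, ∃ t : ℝ, 0 < t ∧ c + t • v ∈ C) :
    c ∈ interior C := by
  have hc : c ∈ C := by
    obtain ⟨_, -, h⟩ := habs 0
    simpa using h
  let shrink (n : ℕ) : E ≃ₜ E :=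
    (Homeomorph.smulOfNeZero ((n : ℝ) + 1)⁻¹ (by positivity)).trans (Homeomorph.addLeft c)
  have hcover : ⋃ n, shrink n ⁻¹' C = univ := by
    refine eq_univ_of_forall fun v => mem_iUnion.2 ?_
    obtain ⟨t, ht, hv⟩ := habs v
    obtain ⟨n, hn⟩ := exists_nat_one_div_lt ht
    have := hconv.add_smul_mem hc hv (t := ((n : ℝ) + 1)⁻¹ / t)
      ⟨by positivity, by rw [div_le_one ht, ← one_div]; exact hn.le⟩
    exact ⟨n, by simpa [shrink, smul_smul, ht.ne'] using this⟩
  obtain ⟨n, v, hv⟩ := nonempty_interior_of_iUnion_of_closed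
    (fun n => hclosed.preimage (shrink n).continuous) hcover
  rw [← Homeomorph.preimage_interior] at hv
  -- `c` lies strictly between the interior point `shrink n v` and its reflection through `c`
  obtain ⟨t, ht, hq⟩ := habs (c - shrink n v)
  have := hconv.add_smul_sub_mem_interior hq hv (t := t / (1 + t))
    ⟨by positivity, by rw [div_le_one (by positivity)]; linarith⟩
  convert this using 1
  match_scalars <;> field_simp <;> ring

theorem IsClosed.exists_prodMk_mem_of_halving_step {X Y : Type*} [PseudoMetricSpace X]
    [CompleteSpace X] [PseudoMetricSpace Y] {G : Set (X × Y)} (hG : IsClosed G) {y : Y}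
    {c ε₀ : ℝ}
    (hstep : ∀ ε, 0 < ε → ε ≤ ε₀ → ∀ p ∈ G, dist p.2 y < ε →
      ∃ q ∈ G, dist q.2 y < ε / 2 ∧ dist q.1 p.1 ≤ c * ε)
    {p : X × Y} (hp : p ∈ G) (hpy : dist p.2 y < ε₀) : ∃ x, (x, y) ∈ G := by
  choose! next hnextG hnexty hnextdist using hstep
  have hεn (n : ℕ) : ε₀ / 2 ^ n ≤ ε₀ :=
    div_le_self (dist_nonneg.trans hpy.le) (one_le_pow₀ one_le_two)
  let seq (n : ℕ) : X × Y := Nat.rec p (fun n q => next (ε₀ / 2 ^ n) q) n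
  have hseq (n : ℕ) : seq n ∈ G ∧ dist (seq n).2 y < ε₀ / 2 ^ n := by
    induction n with
    | zero => simpa using ⟨hp, hpy⟩
    | succ n ih =>
      have hε := dist_nonneg.trans_lt ih.2
      rw [pow_succ, ← div_div]
      exact ⟨hnextG _ hε (hεn n) _ ih.1 ih.2, hnexty _ hε (hεn n) _ ih.1 ih.2⟩
  have hstep_dist (n : ℕ) : dist (seq n).1 (seq (n + 1)).1 ≤ 2 * c * ε₀ / 2 / 2 ^ n := by
    rw [dist_comm]
    convert hnextdist _ (dist_nonneg.trans_lt (hseq n).2) (hεn n) _ (hseq n).1 (hseq n).2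
      using 1
    ring
  obtain ⟨x, hx⟩ := cauchySeq_tendsto_of_complete (cauchySeq_of_le_geometric_two hstep_dist)
  have hy : Tendsto (fun n => (seq n).2) atTop (𝓝 y) := by
    refine tendsto_iff_dist_tendsto_zero.2 <| squeeze_zero (fun _ => dist_nonneg)
      (fun n => (hseq n).2.le) ?_
    simpa [div_eq_mul_inv] using (tendsto_pow_atTop_nhds_zero_of_lt_one
      (by norm_num : (0 : ℝ) ≤ 2⁻¹) (by norm_num)).const_mul ε₀
  exact ⟨x, hG.mem_of_tendsto (hx.prodMk_nhds hy) (.of_forall fun n => (hseq n).1)⟩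

theorem Metric.infEDist_le_mul_infEDist {α β : Type*} [PseudoMetricSpace α]
    [PseudoMetricSpace β] {K : ℝ≥0} (hK : K ≠ 0) {a : α} {s : Set α} {b : β} {t : Set β}
    (h : ∀ z ∈ t, ∃ w ∈ s, dist a w ≤ K * dist b z) : infEDist a s ≤ K * infEDist b t := by
  rw [mul_comm, ← ENNReal.div_le_iff_le_mul (.inl (by simpa using hK)) (.inl coe_ne_top)]
  refine le_infEDist.2 fun z hz => ?_
  obtain ⟨w, hw, hdist⟩ := h z hz
  rw [ENNReal.div_le_iff_le_mul (.inl (by simpa using hK)) (.inl coe_ne_top), mul_comm]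
  calc infEDist a s ≤ edist a w := infEDist_le_edist_of_mem hw
    _ ≤ K * edist b z := by
      rw [edist_dist, edist_dist, ← ENNReal.ofReal_coe_nnreal, ← ENNReal.ofReal_mul K.coe_nonneg]
      exact ENNReal.ofReal_le_ofReal hdist

namespace SetRel

variable {X Y : Type*} [NormedAddCommGroup X] [NormedSpace ℝ X]
  [NormedAddCommGroup Y] [NormedSpace ℝ Y] {G : SetRel X Y} {xb : X} {yb : Y}

theorem convex_image (hconv : Convex ℝ G) {s : Set X} (hs : Convex ℝ s) :
    Convex ℝ (G.image s) := by
  rintro _ ⟨x₁, hx₁, h₁⟩ _ ⟨x₂, hx₂, h₂⟩ a b ha hb hab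
  exact ⟨a • x₁ + b • x₂, hs hx₁ hx₂ ha hb hab, hconv h₁ h₂ ha hb hab⟩

theorem exists_add_smul_mem_image_closedBall (hconv : Convex ℝ G) (hxy : (xb, yb) ∈ G)
    (hint : yb ∈ interior G.cod) {ρ : ℝ} (hρ : 0 < ρ) (v : Y) :
    ∃ t : ℝ, 0 < t ∧ yb + t • v ∈ G.image (Metric.closedBall xb ρ) := by
  obtain ⟨s, ⟨x, hx⟩, hs⟩ : ∃ s : ℝ, yb + s • v ∈ G.cod ∧ 0 < s := by
    have hlim : Tendsto (fun s : ℝ => yb + s • v) (𝓝[>] 0) (𝓝 yb) :=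
      tendsto_nhdsWithin_of_tendsto_nhds <| Continuous.tendsto' (by fun_prop) _ _ (by simp)
    exact ((hlim.eventually (mem_interior_iff_mem_nhds.1 hint)).and self_mem_nhdsWithin).exists
  set τ := ρ / (ρ + ‖x - xb‖)
  have hτ : τ ∈ Icc (0 : ℝ) 1 := ⟨by positivity, div_le_one_of_le₀ (by simp) (by positivity)⟩
  refine ⟨τ * s, mul_pos (by positivity) hs, xb + τ • (x - xb), ?_, ?_⟩
  · rw [Metric.mem_closedBall, dist_eq_norm, add_sub_cancel_left, norm_smul,
      Real.norm_of_nonneg hτ.1]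
    calc τ * ‖x - xb‖ ≤ τ * (ρ + ‖x - xb‖) := by gcongr; linarith
      _ = ρ := div_mul_cancel₀ _ (by positivity)
  · simpa [mul_smul] using hconv.add_smul_sub_mem hxy hx hτ

theorem exists_ball_subset_closure_image_closedBall [CompleteSpace Y] (hconv : Convex ℝ G)
    (hxy : (xb, yb) ∈ G) (hint : yb ∈ interior G.cod) {ρ : ℝ} (hρ : 0 < ρ) :
    ∃ r > 0, Metric.ball yb r ⊆ closure (G.image (Metric.closedBall xb ρ)) := by
  have hyb : yb ∈ interior (closure (G.image (Metric.closedBall xb ρ))) :=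
    (convex_image hconv (convex_closedBall xb ρ)).closure
      |>.mem_interior_of_isClosed_of_forall_exists_add_smul_mem isClosed_closure fun v =>
        (exists_add_smul_mem_image_closedBall hconv hxy hint hρ v).imp fun _ ht =>
          ⟨ht.1, subset_closure ht.2⟩
  exact Metric.mem_nhds_iff.1 (mem_interior_iff_mem_nhds.1 hyb)

theorem exists_dist_snd_lt_half (hconv : Convex ℝ G) {ρ r : ℝ}
    (hdom : G.dom ⊆ Metric.closedBall xb ρ) (hball : Metric.ball yb r ⊆ closure G.cod)
    {y : Y} (hy : dist y yb < r / 2) {ε : ℝ} (hε : 0 < ε) (hεr : ε ≤ r / 2)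
    {p : X × Y} (hp : p ∈ G) (hpy : dist p.2 y < ε) :
    ∃ q ∈ G, dist q.2 y < ε / 2 ∧ dist q.1 p.1 ≤ 4 * ρ / r * ε := by
  obtain ⟨x₀, y₀⟩ := p
  have hr : 0 < r := by linarith
  set l := 2 * ε / r
  have hl : 0 < l := by positivity
  have hl1 : l ≤ 1 := by rw [div_le_one hr]; linarith
  -- `y = l • z + (1 - l) • y₀` with `z ∈ B(yb, r)`, so a point of `G` over a point near `z`
  -- moves `(x₀, y₀)` by `O(ε)` and brings `y₀` within `ε / 2` of `y`
  set z := l⁻¹ • (y - (1 - l) • y₀)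
  have hz : z ∈ Metric.ball yb r := by
    have hzyb : z - yb = l⁻¹ • (l • (y - yb) + (1 - l) • (y - y₀)) := by
      match_scalars <;> field_simp; ring
    rw [Metric.mem_ball, dist_eq_norm, hzyb, norm_smul, Real.norm_of_nonneg (inv_pos.2 hl).le]
    rw [dist_eq_norm] at hy
    rw [dist_eq_norm, norm_sub_rev] at hpy
    calc l⁻¹ * ‖l • (y - yb) + (1 - l) • (y - y₀)‖
        ≤ l⁻¹ * (l * ‖y - yb‖ + (1 - l) * ‖y - y₀‖) := by
          gcongr
          refine (norm_add_le _ _).trans_eq ?_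
          rw [norm_smul, norm_smul, Real.norm_of_nonneg hl.le, Real.norm_of_nonneg (by linarith)]
      _ < l⁻¹ * (l * (r / 2) + 1 * ε) := by gcongr; nlinarith [norm_nonneg (y - y₀)]
      _ = r := by simp only [l]; field_simp; ring
  obtain ⟨w, ⟨u, huw⟩, hzw⟩ := Metric.mem_closure_iff.1 (hball hz) (r / 4) (by positivity)
  refine ⟨l • (u, w) + (1 - l) • (x₀, y₀), hconv huw hp hl.le (by linarith) (by ring), ?_, ?_⟩
  · have : l • w + (1 - l) • y₀ - y = l • (w - z) := by
      match_scalars <;> field_simp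
    simp only [Prod.snd_add, Prod.smul_snd]
    rw [dist_eq_norm, this, norm_smul, Real.norm_of_nonneg hl.le, ← dist_eq_norm, dist_comm]
    calc l * dist z w < l * (r / 4) := by gcongr
      _ = ε / 2 := by simp only [l]; field_simp; ring
  · have : l • u + (1 - l) • x₀ - x₀ = l • (u - x₀) := by module
    simp only [Prod.fst_add, Prod.smul_fst]
    rw [dist_eq_norm, this, norm_smul, Real.norm_of_nonneg hl.le, ← dist_eq_norm]
    have hu : dist u x₀ ≤ 2 * ρ := by
      have hu := hdom ⟨w, huw⟩
      have hx₀ := hdom ⟨y₀, hp⟩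
      rw [Metric.mem_closedBall] at hu hx₀
      linarith [dist_triangle_right u x₀ xb]
    calc l * dist u x₀ ≤ l * (2 * ρ) := by gcongr
      _ = 4 * ρ / r * ε := by ring

theorem ball_half_subset_image_of_ball_subset_closure_image [CompleteSpace X]
    (hconv : Convex ℝ G) (hclosed : IsClosed G) {ρ r : ℝ}
    (hball : Metric.ball yb r ⊆ closure (G.image (Metric.closedBall xb ρ))) :
    Metric.ball yb (r / 2) ⊆ G.image (Metric.closedBall xb ρ) := by
  intro y hy
  set G₁ : SetRel X Y := G ∩ Prod.fst ⁻¹' Metric.closedBall xb ρ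
  have hcod : G₁.cod = G.image (Metric.closedBall xb ρ) := by
    ext y
    exact ⟨fun ⟨x, h, hx⟩ => ⟨x, hx, h⟩, fun ⟨x, hx, h⟩ => ⟨x, h, hx⟩⟩
  rw [← hcod] at hball ⊢
  have hr : 0 < r / 2 := dist_nonneg.trans_lt hy
  obtain ⟨_, ⟨x₀, hp⟩, hpy⟩ :=
    Metric.mem_closure_iff.1 (hball (Metric.ball_subset_ball (by linarith) hy)) (r / 2) hr
  obtain ⟨x, hx⟩ := (hclosed.inter (Metric.isClosed_closedBall.preimage continuous_fst))
    |>.exists_prodMk_mem_of_halving_step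
      (fun ε hε hεr p hp hpy => exists_dist_snd_lt_half
        (hconv.inter ((convex_closedBall xb ρ).linear_preimage (LinearMap.fst ℝ X Y)))
        (fun x ⟨_, hx⟩ => hx.2) hball hy hε hεr hp hpy)
      hp (by rwa [dist_comm])
  exact ⟨x, hx⟩

theorem exists_mem_dist_le_of_ball_subset_image (hconv : Convex ℝ G) {s ρ : ℝ}
    (hball : Metric.ball yb s ⊆ G.image (Metric.closedBall xb ρ)) {y : Y}
    (hy : dist y yb < s / 2) {x₀ : X} {y₀ : Y} (h₀ : (x₀, y₀) ∈ G) :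
    ∃ x, (x, y) ∈ G ∧ dist x x₀ ≤ 2 / s * (ρ + dist x₀ xb) * dist y y₀ := by
  rcases eq_or_ne y y₀ with rfl | hne
  · exact ⟨x₀, h₀, by simp⟩
  have hs : 0 < s := by linarith [dist_nonneg (x := y) (y := yb)]
  have ht : 0 < dist y y₀ := dist_pos.2 hne
  -- `y = l • w + (1 - l) • y₀` with `w := y + a • (y - y₀) ∈ B(yb, s)` and `l := (1 + a)⁻¹ ≤ a⁻¹`
  set a := s / 2 / dist y y₀
  have ha : 0 < a := by positivity
  obtain ⟨u, hu, huw⟩ : y + a • (y - y₀) ∈ G.image (Metric.closedBall xb ρ) := by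
    refine hball ?_
    rw [Metric.mem_ball, dist_eq_norm, add_sub_right_comm]
    calc ‖y - yb + a • (y - y₀)‖ ≤ ‖y - yb‖ + ‖a • (y - y₀)‖ := norm_add_le _ _
      _ = dist y yb + s / 2 := by
        rw [norm_smul, Real.norm_of_nonneg ha.le, ← dist_eq_norm, ← dist_eq_norm]
        simp only [a]; field_simp
      _ < s := by linarith
  set l := (1 + a)⁻¹
  have hl : l ∈ Icc (0 : ℝ) 1 := ⟨by positivity, inv_le_one_of_one_le₀ (by linarith)⟩
  refine ⟨l • u + (1 - l) • x₀, ?_, ?_⟩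
  · convert hconv huw h₀ hl.1 (sub_nonneg.2 hl.2) (by ring) using 1
    ext
    · rfl
    · simp only [Prod.snd_add, Prod.smul_snd, l]
      match_scalars <;> field_simp; ring
  · have hux : dist u x₀ ≤ ρ + dist x₀ xb := by
      rw [Metric.mem_closedBall] at hu
      linarith [dist_triangle u xb x₀, dist_comm x₀ xb]
    have hla : l ≤ a⁻¹ := inv_anti₀ ha (by linarith)
    rw [dist_eq_norm, show l • u + (1 - l) • x₀ - x₀ = l • (u - x₀) by module, norm_smul,
      Real.norm_of_nonneg hl.1, ← dist_eq_norm]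
    calc l * dist u x₀ ≤ a⁻¹ * (ρ + dist x₀ xb) := by gcongr
      _ = 2 / s * (ρ + dist x₀ xb) * dist y y₀ := by simp only [a]; field_simp

end SetRel

/-- Robinson–Ursescu theorem: if `F : X ⇒ Y` between Banach spaces has closed
convex graph and `yb ∈ int F(X)`, then `F` is metrically regular at every point
`(xb, yb)` of its graph: there are `K > 0` and `ε > 0` such that
`d(x, F⁻¹ y) ≤ K d(y, F x)` whenever `‖x − xb‖ < ε` and `‖y − yb‖ < ε`. -/
theorem robinson_ursescu {X Y : Type*}
    [NormedAddCommGroup X] [NormedSpace ℝ X] [CompleteSpace X]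
    [NormedAddCommGroup Y] [NormedSpace ℝ Y] [CompleteSpace Y]
    (F : X → Set Y)
    (hconv : Convex ℝ {p : X × Y | p.2 ∈ F p.1})
    (hclosed : IsClosed {p : X × Y | p.2 ∈ F p.1})
    (yb : Y) (hint : yb ∈ interior {y : Y | ∃ x : X, y ∈ F x})
    (xb : X) (hxy : yb ∈ F xb) :
    ∃ K : ℝ≥0, 0 < K ∧ ∃ ε : ℝ, 0 < ε ∧ ∀ x : X, ∀ y : Y,
      dist x xb < ε → dist y yb < ε →
        infEdist x {u : X | y ∈ F u} ≤ (K : ℝ≥0∞) * infEdist y (F x) := by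
  obtain ⟨r, hr, hdense⟩ :=
    SetRel.exists_ball_subset_closure_image_closedBall hconv hxy hint one_pos
  have hopen := SetRel.ball_half_subset_image_of_ball_subset_closure_image hconv hclosed hdense
  have hK : (0 : ℝ≥0) < ⟨8 / r, by positivity⟩ :=
    NNReal.coe_pos.1 (show (0 : ℝ) < 8 / r by positivity)
  refine ⟨_, hK, min 1 (r / 4), by positivity,
    fun x y hx hy => Metric.infEDist_le_mul_infEDist hK.ne' fun y₀ hy₀ => ?_⟩
  obtain ⟨x', hx', hdist⟩ := SetRel.exists_mem_dist_le_of_ball_subset_image hconv hopen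
    (hy.trans_le ((min_le_right _ _).trans_eq (by ring))) (show (x, y₀) ∈ _ from hy₀)
  refine ⟨x', hx', ?_⟩
  calc dist x x' ≤ 2 / (r / 2) * (1 + dist x xb) * dist y y₀ := by rw [dist_comm]; exact hdist
    _ ≤ 2 / (r / 2) * (1 + 1) * dist y y₀ := by gcongr; exact hx.le.trans (min_le_left _ _)
    _ = 8 / r * dist y y₀ := by ring
end

section
/- Let F : ℝⁿ ⇒ ℝᵐ be a polyhedral set-valued mapping with closed graph (i.e., the graph is a finite union of convex polyhedral sets). Then there exists K > 0 such that for every (x̄, ȳ) ∈ graph F there is ε > 0 with d(x, F⁻¹(ȳ)) ≤ K d(ȳ, F(x)) whenever ‖x − x̄‖ < Kε. In particular, F is metrically subregular at every point of its graph with a uniform modulus. -/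
/-
On each convex piece the graph is `{(x, y) | ⟪aᵢ, x⟫ + wᵢ y ≤ bᵢ}`, so the fibre over `y` is a
polyhedron whose right-hand side moves Lipschitz-continuously with `y`. Hoffman's error bound, whose
constant does not depend on the right-hand side, turns this into the estimate on each piece. Near a
point `(x̄, ȳ)` of the graph, the pieces not containing it stay at positive distance, so only pieces
through `(x̄, ȳ)` matter and the constant is a maximum over the finitely many pieces.

Hoffman's bound comes from projecting `x` onto the feasible set: by Farkas' lemma `x - p` lies in
the cone spanned by the active normals, by Carathéodory it is a nonnegative combination of linearly
independent ones, and then its coefficients are bounded by a fixed multiple of `‖x - p‖`.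
-/

open EMetric ENNReal

/-- A convex polyhedron: the solution set of finitely many linear inequalities
(equalities being expressible by pairs of inequalities). -/
def IsConvexPolyhedron {E : Type*} [AddCommGroup E] [Module ℝ E] (S : Set E) : Prop :=
  ∃ (ι : Type) (_ : Fintype ι) (c : ι → (E →ₗ[ℝ] ℝ)) (b : ι → ℝ),
    S = {x | ∀ i, c i x ≤ b i}

/-- A polyhedral set: a finite union of convex polyhedra. -/
def IsPolyhedral {E : Type*} [AddCommGroup E] [Module ℝ E] (S : Set E) : Prop :=
  ∃ (N : ℕ) (P : Fin N → Set E), (∀ i, IsConvexPolyhedron (P i)) ∧ S = ⋃ i, P i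

open scoped RealInnerProductSpace Topology

section ConicHull

variable {ι E : Type*} [AddCommGroup E] [Module ℝ E]

def conicHull (a : ι → E) (s : Finset ι) : PointedCone ℝ E where
  carrier := {w | ∃ μ : ι → ℝ, (∀ i ∈ s, 0 ≤ μ i) ∧ ∑ i ∈ s, μ i • a i = w}
  zero_mem' := ⟨0, fun _ _ => le_rfl, by simp⟩
  add_mem' := by
    rintro _ _ ⟨μ, hμ, rfl⟩ ⟨ν, hν, rfl⟩
    exact ⟨μ + ν, fun i hi => add_nonneg (hμ i hi) (hν i hi),
      by simp [add_smul, Finset.sum_add_distrib]⟩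
  smul_mem' := by
    rintro c _ ⟨μ, hμ, rfl⟩
    refine ⟨fun i => c * μ i, fun i hi => mul_nonneg c.2 (hμ i hi), ?_⟩
    rw [Finset.smul_sum]
    exact Finset.sum_congr rfl fun i _ => mul_smul _ _ _

variable {a : ι → E} {s t : Finset ι} {w : E}

theorem mem_conicHull :
    w ∈ conicHull a s ↔ ∃ μ : ι → ℝ, (∀ i ∈ s, 0 ≤ μ i) ∧ ∑ i ∈ s, μ i • a i = w :=
  Iff.rfl

theorem mem_conicHull_of_mem {i : ι} (hi : i ∈ s) : a i ∈ conicHull a s := by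
  classical
  refine ⟨Pi.single i 1, fun j _ => ?_, ?_⟩
  · by_cases h : j = i <;> simp [h]
  · rw [Finset.sum_eq_single i (fun j _ hj => by simp [hj]) (absurd hi)]
    simp

theorem conicHull_mono (hst : s ⊆ t) : conicHull a s ≤ conicHull a t := by
  classical
  rintro _ ⟨μ, hμ, rfl⟩
  refine ⟨fun i => if i ∈ s then μ i else 0, fun i _ => ?_, ?_⟩
  · by_cases h : i ∈ s <;> simp [h, hμ]
  · rw [← Finset.sum_subset hst fun i _ hi => by simp [hi]]
    exact Finset.sum_congr rfl fun i hi => by simp [hi]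

/-- The reduction step of Carathéodory's theorem for cones: a linear dependence among the
generators lets one shift the coefficients until one of them vanishes. -/
theorem exists_erase_mem_conicHull_of_not_linearIndepOn [DecidableEq ι] (hw : w ∈ conicHull a s)
    (hs : ¬LinearIndepOn ℝ a (s : Set ι)) : ∃ j ∈ s, w ∈ conicHull a (s.erase j) := by
  obtain ⟨μ, hμ, rfl⟩ := hw
  obtain ⟨g, hg, hgpos⟩ : ∃ g : ι → ℝ, ∑ i ∈ s, g i • a i = 0 ∧ ∃ i ∈ s, 0 < g i := by
    obtain ⟨g, hg, i, hi, hgi⟩ := not_linearIndepOn_finset_iff.1 hs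
    rcases hgi.lt_or_gt with hneg | hpos
    · exact ⟨-g, by simp [Finset.sum_neg_distrib, hg], i, hi, neg_pos.2 hneg⟩
    · exact ⟨g, hg, i, hi, hpos⟩
  obtain ⟨j, hjP, hjmin⟩ := (s.filter fun i => 0 < g i).exists_min_image (fun i => μ i / g i)
    (by simpa [Finset.filter_nonempty_iff] using hgpos)
  rw [Finset.mem_filter] at hjP
  set θ := μ j / g j
  have hθ : 0 ≤ θ := div_nonneg (hμ j hjP.1) hjP.2.le
  have hshift : ∀ i ∈ s, θ * g i ≤ μ i := by
    intro i hi
    rcases le_or_gt (g i) 0 with hgi | hgi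
    · nlinarith [hμ i hi]
    · exact (le_div_iff₀ hgi).1 (hjmin i (Finset.mem_filter.2 ⟨hi, hgi⟩))
  refine ⟨j, hjP.1, fun i => μ i - θ * g i,
    fun i hi => sub_nonneg.2 (hshift i (Finset.mem_of_mem_erase hi)), ?_⟩
  rw [Finset.sum_erase _ (by simp [θ, div_mul_cancel₀ _ hjP.2.ne'])]
  simp only [sub_smul, Finset.sum_sub_distrib, mul_smul, ← Finset.smul_sum, hg, smul_zero,
    sub_zero]

theorem exists_linearIndepOn_of_mem_conicHull (hw : w ∈ conicHull a s) :
    ∃ t ⊆ s, LinearIndepOn ℝ a (t : Set ι) ∧ w ∈ conicHull a t := by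
  classical
  induction s using Finset.strongInduction with
  | H s ih =>
    by_cases hs : LinearIndepOn ℝ a (s : Set ι)
    · exact ⟨s, subset_rfl, hs, hw⟩
    · obtain ⟨j, hj, hw'⟩ := exists_erase_mem_conicHull_of_not_linearIndepOn hw hs
      obtain ⟨t, hts, ht, hwt⟩ := ih _ (Finset.erase_ssubset hj) hw'
      exact ⟨t, hts.trans (Finset.erase_subset _ _), ht, hwt⟩

theorem coe_conicHull_eq_image :
    (conicHull a t : Set E) =
      Fintype.linearCombination ℝ (fun i : t => a i) '' Set.Ici 0 := by
  classical
  ext w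
  simp only [SetLike.mem_coe, mem_conicHull, Set.mem_image, Set.mem_Ici,
    Fintype.linearCombination_apply]
  constructor
  · rintro ⟨μ, hμ, rfl⟩
    exact ⟨fun i => μ i, fun i => hμ i i.2, Finset.sum_coe_sort t fun i => μ i • a i⟩
  · rintro ⟨ν, hν, rfl⟩
    refine ⟨fun i => if h : i ∈ t then ν ⟨i, h⟩ else 0,
      fun i hi => by simpa [hi] using hν ⟨i, hi⟩, ?_⟩
    rw [← Finset.sum_coe_sort t]
    exact Finset.sum_congr rfl fun i _ => by simp

end ConicHull

section Normed

variable {ι E : Type*} [NormedAddCommGroup E] [NormedSpace ℝ E] {a : ι → E} {t : Finset ι}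

theorem LinearIndepOn.exists_sum_abs_le_mul_norm (ht : LinearIndepOn ℝ a (t : Set ι)) :
    ∃ C, 0 ≤ C ∧ ∀ μ : ι → ℝ, ∑ i ∈ t, |μ i| ≤ C * ‖∑ i ∈ t, μ i • a i‖ := by
  set T := Fintype.linearCombination ℝ (fun i : t => a i)
  have hT : LinearMap.ker T = ⊥ :=
    LinearMap.ker_eq_bot.2 (linearIndependent_iff_injective_fintypeLinearCombination.1 ht)
  obtain ⟨K, -, hK⟩ := T.exists_antilipschitzWith hT
  refine ⟨t.card * K, by positivity, fun μ => ?_⟩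
  set ν : t → ℝ := fun i => μ i
  have hTν : T ν = ∑ i ∈ t, μ i • a i := by
    simp only [T, Fintype.linearCombination_apply]
    exact Finset.sum_coe_sort t fun i => μ i • a i
  calc ∑ i ∈ t, |μ i| = ∑ i : t, ‖ν i‖ := (Finset.sum_coe_sort t fun i => |μ i|).symm
    _ ≤ ∑ _i : t, ‖ν‖ := Finset.sum_le_sum fun i _ => norm_le_pi_norm ν i
    _ = t.card * ‖ν‖ := by simp
    _ ≤ t.card * (K * ‖T ν‖) := by gcongr; exact hK.le_mul_norm (map_zero T) ν
    _ = t.card * K * ‖∑ i ∈ t, μ i • a i‖ := by rw [hTν, mul_assoc]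

theorem LinearIndepOn.isClosed_conicHull (ht : LinearIndepOn ℝ a (t : Set ι)) :
    IsClosed (conicHull a t : Set E) := by
  set T := Fintype.linearCombination ℝ (fun i : t => a i)
  have hT : LinearMap.ker T = ⊥ :=
    LinearMap.ker_eq_bot.2 (linearIndependent_iff_injective_fintypeLinearCombination.1 ht)
  obtain ⟨K, -, hK⟩ := T.exists_antilipschitzWith hT
  rw [coe_conicHull_eq_image]
  exact (hK.isClosedEmbedding T.toContinuousLinearMap.uniformContinuous).isClosedMap _ isClosed_Ici

theorem isClosed_conicHull (a : ι → E) (s : Finset ι) : IsClosed (conicHull a s : Set E) := by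
  classical
  have : (conicHull a s : Set E) =
      ⋃ t ∈ s.powerset.filter fun t : Finset ι => LinearIndepOn ℝ a ↑t,
        (conicHull a t : Set E) := by
    ext w
    simp only [SetLike.mem_coe, Set.mem_iUnion, Finset.mem_filter, Finset.mem_powerset,
      exists_prop]
    constructor
    · intro hw
      obtain ⟨t, hts, ht, hwt⟩ := exists_linearIndepOn_of_mem_conicHull hw
      exact ⟨t, ⟨hts, ht⟩, hwt⟩
    · rintro ⟨t, ⟨hts, -⟩, hwt⟩
      exact conicHull_mono hts hwt
  rw [this]
  exact isClosed_biUnion_finset fun t ht => (Finset.mem_filter.1 ht).2.isClosed_conicHull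

theorem exists_mem_conicHull_sum_le [Finite ι] (a : ι → E) :
    ∃ C, 0 ≤ C ∧ ∀ (s : Finset ι), ∀ w ∈ conicHull a s, ∃ t ⊆ s, ∃ ν : ι → ℝ,
      (∀ i ∈ t, 0 ≤ ν i) ∧ ∑ i ∈ t, ν i • a i = w ∧ ∑ i ∈ t, ν i ≤ C * ‖w‖ := by
  have : ∀ t : Finset ι, ∃ C, 0 ≤ C ∧ (LinearIndepOn ℝ a (t : Set ι) →
      ∀ μ : ι → ℝ, ∑ i ∈ t, |μ i| ≤ C * ‖∑ i ∈ t, μ i • a i‖) := by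
    intro t
    by_cases ht : LinearIndepOn ℝ a (t : Set ι)
    · obtain ⟨C, hC, h⟩ := ht.exists_sum_abs_le_mul_norm
      exact ⟨C, hC, fun _ => h⟩
    · exact ⟨0, le_rfl, fun h => absurd h ht⟩
  choose C hC₀ hC using this
  obtain ⟨C', hC'⟩ := Finite.exists_le C
  refine ⟨C', (hC₀ ∅).trans (hC' ∅), fun s w hw => ?_⟩
  obtain ⟨t, hts, ht, ν, hν, rfl⟩ := exists_linearIndepOn_of_mem_conicHull hw
  refine ⟨t, hts, ν, hν, rfl, ?_⟩
  calc ∑ i ∈ t, ν i = ∑ i ∈ t, |ν i| :=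
        Finset.sum_congr rfl fun i hi => (abs_of_nonneg (hν i hi)).symm
    _ ≤ C t * ‖∑ i ∈ t, ν i • a i‖ := hC t ht ν
    _ ≤ C' * ‖∑ i ∈ t, ν i • a i‖ := by gcongr; exact hC' t

end Normed

section Inner

variable {ι E : Type*} [NormedAddCommGroup E] [InnerProductSpace ℝ E] {a : ι → E}

theorem mem_conicHull_of_forall_inner_nonpos [CompleteSpace E] {s : Finset ι} {w : E}
    (h : ∀ d, (∀ i ∈ s, ⟪a i, d⟫ ≤ 0) → ⟪w, d⟫ ≤ 0) : w ∈ conicHull a s := by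
  by_contra hw
  obtain ⟨y, hy, hwy⟩ :=
    ProperCone.hyperplane_separation' ⟨conicHull a s, isClosed_conicHull a s⟩ hw
  have := h (-y) fun i hi => by
    simpa [inner_neg_right] using hy _ (mem_conicHull_of_mem hi)
  rw [inner_neg_right] at this
  linarith

/-- The inactive constraints have slack at `p`, so `p + τ • d` stays feasible for small `τ > 0`. -/
theorem inner_nonpos_of_forall_active [Finite ι] {b : ι → ℝ} {p v d : E}
    (hp : ∀ i, ⟪a i, p⟫ ≤ b i) (hv : ∀ z, (∀ i, ⟪a i, z⟫ ≤ b i) → ⟪v, z - p⟫ ≤ 0)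
    (hd : ∀ i, ⟪a i, p⟫ = b i → ⟪a i, d⟫ ≤ 0) : ⟪v, d⟫ ≤ 0 := by
  have hstep : ∀ i, ∀ᶠ τ in 𝓝[>] (0 : ℝ), ⟪a i, p + τ • d⟫ ≤ b i := by
    intro i
    simp only [inner_add_right, real_inner_smul_right]
    rcases (hp i).eq_or_lt with hact | hslack
    · filter_upwards [self_mem_nhdsWithin] with τ (hτ : 0 < τ)
      nlinarith [hd i hact]
    · have : Filter.Tendsto (fun τ : ℝ => ⟪a i, p⟫ + τ * ⟪a i, d⟫) (𝓝 0) (𝓝 ⟪a i, p⟫) := by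
        have hc : Continuous fun τ : ℝ => ⟪a i, p⟫ + τ * ⟪a i, d⟫ := by fun_prop
        simpa using hc.tendsto 0
      exact nhdsWithin_le_nhds ((this.eventually_lt_const hslack).mono fun _ => le_of_lt)
  obtain ⟨τ, hτS, hτ⟩ := ((Filter.eventually_all.2 hstep).and self_mem_nhdsWithin).exists
  have := hv _ hτS
  rw [add_sub_cancel_left, real_inner_smul_right] at this
  exact nonpos_of_mul_nonpos_right this hτ

theorem norm_sq_le_sum_mul_of_inner_le {t : Finset ι} {ν : ι → ℝ} {r : ℝ}
    (hν : ∀ i ∈ t, 0 ≤ ν i) (hr : ∀ i ∈ t, ⟪a i, ∑ j ∈ t, ν j • a j⟫ ≤ r) :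
    ‖∑ i ∈ t, ν i • a i‖ ^ 2 ≤ (∑ i ∈ t, ν i) * r := by
  rw [← real_inner_self_eq_norm_sq, sum_inner, Finset.sum_mul]
  refine Finset.sum_le_sum fun i hi => ?_
  rw [real_inner_smul_left]
  exact mul_le_mul_of_nonneg_left (hr i hi) (hν i hi)

theorem exists_hoffman_constant [Fintype ι] [CompleteSpace E] (a : ι → E) :
    ∃ K, ∀ (b : ι → ℝ) (x : E) (r : ℝ), 0 ≤ r → (∃ z, ∀ i, ⟪a i, z⟫ ≤ b i) →
      (∀ i, ⟪a i, x⟫ ≤ b i + r) → ∃ p, (∀ i, ⟪a i, p⟫ ≤ b i) ∧ dist x p ≤ K * r := by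
  classical
  obtain ⟨C, hC₀, hC⟩ := exists_mem_conicHull_sum_le a
  refine ⟨C, fun b x r hr ⟨z, hz⟩ hx => ?_⟩
  set S : Set E := {z | ∀ i, ⟪a i, z⟫ ≤ b i}
  have hS : S = ⋂ i, {z | ⟪a i, z⟫ ≤ b i} := by ext; simp [S]
  have hS_convex : Convex ℝ S := hS ▸ convex_iInter fun i => convex_halfSpace_le
    ((innerₛₗ ℝ (a i)).isLinear) (b i)
  have hS_closed : IsClosed S := hS ▸ isClosed_iInter fun i =>
    isClosed_le (continuous_const.inner continuous_id) continuous_const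
  obtain ⟨p, hpS, hproj⟩ :=
    exists_norm_eq_iInf_of_complete_convex (K := S) ⟨z, hz⟩ hS_closed.isComplete hS_convex x
  have hnormal := (norm_eq_iInf_iff_real_inner_le_zero hS_convex hpS).1 hproj
  have hcone : x - p ∈ conicHull a {i | ⟪a i, p⟫ = b i} :=
    mem_conicHull_of_forall_inner_nonpos fun d hd =>
      inner_nonpos_of_forall_active hpS hnormal fun i hi => hd i (by simpa using hi)
  obtain ⟨t, ht, ν, hν, hsum, hνC⟩ := hC _ _ hcone
  have hres : ∀ i ∈ t, ⟪a i, x - p⟫ ≤ r := by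
    intro i hi
    have hact : ⟪a i, p⟫ = b i := by simpa using ht hi
    rw [inner_sub_right, hact]
    linarith [hx i]
  have hsq : ‖x - p‖ ^ 2 ≤ C * ‖x - p‖ * r := by
    calc ‖x - p‖ ^ 2 ≤ (∑ i ∈ t, ν i) * r :=
          hsum ▸ norm_sq_le_sum_mul_of_inner_le hν (hsum ▸ hres)
      _ ≤ C * ‖x - p‖ * r := by gcongr
  refine ⟨p, hpS, ?_⟩
  rw [dist_eq_norm]
  nlinarith [norm_nonneg (x - p), mul_nonneg hC₀ hr]

end Inner

theorem IsConvexPolyhedron.isClosed {E : Type*} [NormedAddCommGroup E] [NormedSpace ℝ E]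
    [FiniteDimensional ℝ E] {P : Set E} (hP : IsConvexPolyhedron P) : IsClosed P := by
  obtain ⟨ι, _, c, b, rfl⟩ := hP
  simp only [Set.ofPred_forall]
  exact isClosed_iInter fun i => isClosed_le (c i).continuous_of_finiteDimensional continuous_const

section Polyhedral

variable {E F : Type*} [NormedAddCommGroup E] [InnerProductSpace ℝ E] [FiniteDimensional ℝ E]
  [NormedAddCommGroup F] [NormedSpace ℝ F] [FiniteDimensional ℝ F]

/-- Hoffman's bound applied to the constraints in `x`, with right-hand side depending
linearly on `y`. -/
theorem IsConvexPolyhedron.exists_dist_le_mul_dist {P : Set (E × F)} (hP : IsConvexPolyhedron P) :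
    ∃ K, ∀ x y x' y', (x, y) ∈ P → (x', y') ∈ P → ∃ p, (p, y') ∈ P ∧ dist x p ≤ K * dist y y' := by
  obtain ⟨ι, _, c, b, rfl⟩ := hP
  set a : ι → E := fun i =>
    (InnerProductSpace.toDual ℝ E).symm ((c i ∘ₗ LinearMap.inl ℝ E F).toContinuousLinearMap)
  have hc : ∀ i x y, c i (x, y) = ⟪a i, x⟫ + c i (0, y) := by
    intro i x y
    rw [InnerProductSpace.toDual_symm_apply, LinearMap.coe_toContinuousLinearMap',
      LinearMap.comp_apply, LinearMap.inl_apply, ← map_add]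
    simp
  set g : F →L[ℝ] (ι → ℝ) :=
    (LinearMap.pi fun i => c i ∘ₗ LinearMap.inr ℝ E F).toContinuousLinearMap
  have hg : ∀ i y y', c i (0, y') - c i (0, y) ≤ ‖g‖ * dist y y' := by
    intro i y y'
    calc c i (0, y') - c i (0, y) = g (y' - y) i := by simp [g, ← map_sub]
      _ ≤ ‖g (y' - y)‖ := (le_abs_self _).trans (norm_le_pi_norm (g (y' - y)) i)
      _ ≤ ‖g‖ * dist y y' := by rw [dist_comm, dist_eq_norm]; exact g.le_opNorm _
  obtain ⟨K, hK⟩ := exists_hoffman_constant a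
  refine ⟨K * ‖g‖, fun x y x' y' hxy hx'y' => ?_⟩
  replace hxy : ∀ i, c i (x, y) ≤ b i := hxy
  replace hx'y' : ∀ i, c i (x', y') ≤ b i := hx'y'
  obtain ⟨p, hp, hdist⟩ := hK (fun i => b i - c i (0, y')) x (‖g‖ * dist y y') (by positivity)
    ⟨x', fun i => by linarith [hx'y' i, hc i x' y']⟩
    fun i => by linarith [hxy i, hc i x y, hg i y y']
  exact ⟨p, fun i => by linarith [hp i, hc i p y'], by rwa [mul_assoc]⟩

end Polyhedral

theorem exists_pos_forall_mem_of_dist_lt {X κ : Type*} [PseudoMetricSpace X] [Finite κ]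
    {P : κ → Set X} (hP : ∀ k, IsClosed (P k)) (q : X) :
    ∃ δ > 0, ∀ k, ∀ q' ∈ P k, dist q' q < δ → q ∈ P k := by
  have : ∀ᶠ q' in 𝓝 q, ∀ k, q' ∈ P k → q ∈ P k := by
    refine Filter.eventually_all.2 fun k => ?_
    by_cases hq : q ∈ P k
    · exact Filter.Eventually.of_forall fun _ _ => hq
    · exact Filter.mem_of_superset ((hP k).isOpen_compl.mem_nhds hq) fun _ hq' h => (hq' h).elim
  obtain ⟨δ, hδ, h⟩ := Metric.eventually_nhds_iff.1 this
  exact ⟨δ, hδ, fun k q' hq' hd => h hd k hq'⟩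

theorem infEDist_le_ofReal_mul_infEDist {X Y : Type*} [PseudoEMetricSpace X]
    [PseudoEMetricSpace Y] {x : X} {S : Set X} {y₀ : Y} {T : Set Y} {K : ℝ} (hK : 0 < K)
    (h : ∀ y ∈ T, Metric.infEDist x S ≤ ENNReal.ofReal K * edist y₀ y) :
    Metric.infEDist x S ≤ ENNReal.ofReal K * Metric.infEDist y₀ T := by
  have hK₀ : ENNReal.ofReal K ≠ 0 := (ENNReal.ofReal_pos.2 hK).ne'
  simp only [Metric.infEDist, ENNReal.mul_iInf_of_ne hK₀ ENNReal.ofReal_ne_top]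
  exact le_iInf₂ h

theorem IsPolyhedral.exists_subregular {E F : Type*} [NormedAddCommGroup E]
    [InnerProductSpace ℝ E] [FiniteDimensional ℝ E] [NormedAddCommGroup F] [NormedSpace ℝ F]
    [FiniteDimensional ℝ F] {G : Set (E × F)} (hG : IsPolyhedral G) :
    ∃ K, 0 < K ∧ ∀ x₀ y₀, (x₀, y₀) ∈ G → ∃ ε, 0 < ε ∧ ∀ x, dist x x₀ < K * ε →
      Metric.infEDist x {u | (u, y₀) ∈ G} ≤
        ENNReal.ofReal K * Metric.infEDist y₀ {y | (x, y) ∈ G} := by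
  obtain ⟨N, P, hP, rfl⟩ := hG
  choose K hK using fun i => (hP i).exists_dist_le_mul_dist
  obtain ⟨K', hK'⟩ := Finite.exists_le K
  set L := max K' 1
  have hL : 0 < L := lt_max_of_lt_right one_pos
  refine ⟨L, hL, fun x₀ y₀ h₀ => ?_⟩
  obtain ⟨δ, hδ, hloc⟩ := exists_pos_forall_mem_of_dist_lt (fun i => (hP i).isClosed) (x₀, y₀)
  refine ⟨δ / L, div_pos hδ hL, fun x hx => infEDist_le_ofReal_mul_infEDist hL fun y hy => ?_⟩
  rw [mul_div_cancel₀ _ hL.ne'] at hx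
  obtain ⟨i, hi⟩ := Set.mem_iUnion.1 hy
  rw [edist_dist, ← ENNReal.ofReal_mul hL.le, dist_comm]
  by_cases hi₀ : (x₀, y₀) ∈ P i
  · obtain ⟨p, hp, hdist⟩ := hK i x y x₀ y₀ hi hi₀
    calc Metric.infEDist x _ ≤ edist x p := Metric.infEDist_le_edist_of_mem
          (Set.mem_iUnion.2 ⟨i, hp⟩ : (p, y₀) ∈ ⋃ i, P i)
      _ ≤ ENNReal.ofReal (L * dist y y₀) := by
        rw [edist_dist]
        exact ENNReal.ofReal_le_ofReal
          (hdist.trans (by gcongr; exact (hK' i).trans (le_max_left _ _)))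
  · have hfar : δ ≤ dist y y₀ := by
      by_contra! hnear
      exact hi₀ (hloc i (x, y) hi (by rw [Prod.dist_eq]; exact max_lt hx hnear))
    calc Metric.infEDist x _ ≤ edist x x₀ := Metric.infEDist_le_edist_of_mem h₀
      _ ≤ ENNReal.ofReal (L * dist y y₀) := by
        rw [edist_dist]
        exact ENNReal.ofReal_le_ofReal
          ((hx.le.trans hfar).trans (le_mul_of_one_le_left dist_nonneg (le_max_right _ _)))

theorem polyhedral_subregularity_general (n m : ℕ)
    (F : EuclideanSpace ℝ (Fin n) → Set (EuclideanSpace ℝ (Fin m)))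
    (hpoly : IsPolyhedral
      {p : EuclideanSpace ℝ (Fin n) × EuclideanSpace ℝ (Fin m) | p.2 ∈ F p.1}) :
    ∃ K : ℝ, 0 < K ∧ ∀ xb : EuclideanSpace ℝ (Fin n), ∀ yb ∈ F xb,
      ∃ ε : ℝ, 0 < ε ∧ ∀ x : EuclideanSpace ℝ (Fin n), dist x xb < K * ε →
        infEdist x {u : EuclideanSpace ℝ (Fin n) | yb ∈ F u} ≤
          ENNReal.ofReal K * infEdist yb (F x) :=
  hpoly.exists_subregular

/-- Subregularity of polyhedral mappings: a polyhedral set-valued mapping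
`F : ℝⁿ ⇒ ℝᵐ` with closed graph admits a uniform constant `K > 0` such that for
every `(xb, yb) ∈ graph F` there is `ε > 0` with
`d(x, F⁻¹ yb) ≤ K d(yb, F x)` whenever `‖x − xb‖ < K ε`; in particular `F` is
metrically subregular at every point of its graph with a uniform modulus. -/
theorem polyhedral_subregularity (n m : ℕ)
    (F : EuclideanSpace ℝ (Fin n) → Set (EuclideanSpace ℝ (Fin m)))
    (hpoly : IsPolyhedral
      {p : EuclideanSpace ℝ (Fin n) × EuclideanSpace ℝ (Fin m) | p.2 ∈ F p.1})
    (hclosed : IsClosed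
      {p : EuclideanSpace ℝ (Fin n) × EuclideanSpace ℝ (Fin m) | p.2 ∈ F p.1}) :
    ∃ K : ℝ, 0 < K ∧ ∀ xb : EuclideanSpace ℝ (Fin n), ∀ yb ∈ F xb,
      ∃ ε : ℝ, 0 < ε ∧ ∀ x : EuclideanSpace ℝ (Fin n), dist x xb < K * ε →
        infEdist x {u : EuclideanSpace ℝ (Fin n) | yb ∈ F u} ≤
          ENNReal.ofReal K * infEdist yb (F x) :=
  polyhedral_subregularity_general n m F hpoly
end
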